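/- arXiv:2004.04347 — 6 statements merged into one kernel-verified Lean document; each statement's English description precedes it below -/
import Mathlib

section
/- The set of irrational numbers x ∈ (0,1) whose backward continued fraction digits are bounded, i.e. {x ∈ (0,1) \ ℚ : there exists N such that b_j(x) ≤ N for all j ≥ 1}, has Hausdorff dimension 1. -/
open Filter MeasureTheory Set

/-- The Rényi (backward continued fraction) map `f(x) = 1/(1−x) − ⌊1/(1−x)⌋`. -/
noncomputable def renyi (x : ℝ) : ℝ := 1 / (1 - x) - (⌊1 / (1 - x)⌋ : ℤ)

/-- The `j`-th backward continued fraction digit (`j ≥ 1`):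
`b_j(x) = ⌊1/(1 − f^{j−1}(x))⌋ + 1`. -/
noncomputable def bcf (j : ℕ) (x : ℝ) : ℤ := ⌊1 / (1 - renyi^[j - 1] x)⌋ + 1

/-- Birkhoff sum `S_n φ = Σ_{j=0}^{n-1} φ ∘ f^j` for the Rényi map. -/
noncomputable def birkR (φ : ℝ → ℝ) (n : ℕ) (x : ℝ) : ℝ :=
  ∑ j ∈ Finset.range n, φ (renyi^[j] x)

/-- The derivative of the `n`-th iterate of the Rényi map:
`(fⁿ)'(x) = ∏_{j=0}^{n−1} (1 − f^j(x))^{−2}`. -/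
noncomputable def renyiDn (n : ℕ) (x : ℝ) : ℝ :=
  ∏ j ∈ Finset.range n, ((1 - renyi^[j] x)⁻¹) ^ 2

/-- The cylinder `Δ_w = {x ∈ [0,1) : b_j(x) = w_j for 1 ≤ j ≤ n}` of a word
`w` of length `n` of integers. -/
def rcyl (n : ℕ) (w : Fin n → ℤ) : Set ℝ :=
  {x ∈ Set.Ico (0 : ℝ) 1 | ∀ i : Fin n, bcf ((i : ℕ) + 1) x = w i}

/-- `φ` belongs to the class `𝓕` for the Rényi map: there is a bound `D n` on
`S_nφ(x) − S_nφ(y)` over pairs `x, y` in a common `n`-cylinder (in particular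
`D_1(φ) < ∞`), with `D n / n → 0` (i.e. `D_n(φ) = o(n)`). -/
def MemFR (φ : ℝ → ℝ) : Prop :=
  ∃ D : ℕ → ℝ,
    (∀ n : ℕ, ∀ w : Fin n → ℤ, (∀ i, 2 ≤ w i) →
      ∀ x ∈ rcyl n w, ∀ y ∈ rcyl n w, birkR φ n x - birkR φ n y ≤ D n) ∧
    Tendsto (fun n : ℕ => D n / n) atTop (nhds 0)

open scoped ENNReal NNReal

/-!
Fix `N` and use as letters the digit blocks `2^k b` with `k ≤ N` and `3 ≤ b ≤ N`. An infinite
word in these letters codes a point whose Rényi orbit stays in `[0, 1 - 1/N]`, so its digits are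
at most `N + 1`, and which is irrational because it lies strictly inside cylinders with unbounded
denominators. The children of a cylinder fill all of it up to a proportion `O(1/N)`, so the
measure that shares the mass of each cylinder among its children in proportion to their lengths
gives every cylinder `C` mass at most `|C|^s` once `(1/4)^(1-s) ≤ 1 - 6/(N-1)`. Cylinders of the
same level are separated by gaps comparable to their lengths, hence the distribution function of
this measure, read on the coded points, is `s`-Hölder; it maps them onto `[0, 1)`, so they form a
set of dimension at least `s`.
-/

open Finset in
theorem Finset.sum_range_mul_eq_sum_sum {M : Type*} [AddCommMonoid M] (f : ℕ → M) (m n : ℕ) :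
    ∑ i ∈ range (m * n), f i = ∑ j ∈ range m, ∑ r ∈ range n, f (j * n + r) := by
  induction m with
  | zero => simp
  | succ m ih => rw [add_mul, one_mul, sum_range_add, ih, sum_range_succ]

open Finset in
theorem MonotoneOn.sum_sub_le_of_sorted {α β : Type*} [Preorder α] [AddCommGroup β] [PartialOrder β]
    [IsOrderedAddMonoid β] {h : α → β} {x y : α} (hh : MonotoneOn h (Set.Icc x y)) (hxy : x ≤ y)
    {a b : ℕ → α} {n : ℕ} (hab : ∀ i < n, a i ≤ b i) (hba : ∀ i j, i < j → j < n → b i ≤ a j)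
    (hx : ∀ i < n, x ≤ a i) (hy : ∀ i < n, b i ≤ y) :
    ∑ i ∈ range n, (h (b i) - h (a i)) ≤ h y - h x := by
  induction n generalizing y with
  | zero => simpa using hh ⟨le_rfl, hxy⟩ ⟨hxy, le_rfl⟩ hxy
  | succ n ih =>
    have han : a n ≤ y := (hab n n.lt_succ_self).trans (hy n n.lt_succ_self)
    have hsum := ih (hh.mono (Set.Icc_subset_Icc_right han)) (hx n n.lt_succ_self)
      (fun i hi => hab i (by omega)) (fun i j hij hj => hba i j hij (by omega))
      (fun i hi => hx i (by omega)) (fun i hi => hba i n hi n.lt_succ_self)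
    have hlast : h (b n) ≤ h y := hh ⟨(hx n n.lt_succ_self).trans (hab n n.lt_succ_self),
      hy n n.lt_succ_self⟩ ⟨hxy, le_rfl⟩ (hy n n.lt_succ_self)
    calc ∑ i ∈ range (n + 1), (h (b i) - h (a i))
        ≤ (h (a n) - h x) + (h (b n) - h (a n)) := by rw [sum_range_succ]; gcongr
      _ = h (b n) - h x := sub_add_sub_cancel' _ _ _
      _ ≤ h y - h x := by gcongr

theorem irrational_of_forall_exists_approx {x : ℝ}
    (h : ∀ c : ℕ, 0 < c → ∃ q s : ℤ, 0 < s ∧ (q : ℝ) / s < x ∧ x < q / s + 1 / (c * s)) :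
    Irrational x := by
  rintro ⟨a, rfl⟩
  obtain ⟨q, s, hs, hlow, hup⟩ := h a.den a.pos
  have hs' : (0 : ℝ) < s := by exact_mod_cast hs
  have hc : (0 : ℝ) < a.den := by exact_mod_cast a.pos
  rw [Rat.cast_def, div_lt_div_iff₀ hs' hc] at hlow
  have hgap : (1 : ℝ) ≤ a.num * s - q * a.den := by
    have : q * (a.den : ℤ) < a.num * s := by exact_mod_cast hlow
    exact_mod_cast (by omega : (1 : ℤ) ≤ a.num * s - q * a.den)
  rw [Rat.cast_def, ← sub_lt_iff_lt_add', div_sub_div _ _ hc.ne' hs'.ne',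
    div_lt_div_iff_of_pos_right (by positivity)] at hup
  linarith

theorem Nat.sInf_crossing_spec {α : Type*} [LinearOrder α] {f : ℕ → α} {t : α} {M : ℕ}
    (h0 : f 0 ≤ t) (hM : t < f M) :
    sInf {j | t < f (j + 1)} < M ∧ f (sInf {j | t < f (j + 1)}) ≤ t ∧
      t < f (sInf {j | t < f (j + 1)} + 1) := by
  have hM0 : M ≠ 0 := by rintro rfl; exact (h0.trans_lt hM).false
  have hmem : M - 1 ∈ {j | t < f (j + 1)} := by simpa [Nat.sub_add_cancel (Nat.pos_of_ne_zero hM0)]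
  refine ⟨(Nat.sInf_le hmem).trans_lt (by omega), ?_, Nat.sInf_mem ⟨_, hmem⟩⟩
  rcases Nat.eq_zero_or_pos (sInf {j | t < f (j + 1)}) with h | h
  · rwa [h]
  · have : ¬t < f (sInf {j | t < f (j + 1)} - 1 + 1) := Nat.notMem_of_lt_sInf (Nat.sub_lt h one_pos)
    rwa [Nat.sub_add_cancel h, not_lt] at this

theorem dimH_image_le_div_of_dist_le {α X Y : Type*} [MetricSpace X] [MetricSpace Y]
    {g : α → X} {F : α → Y} {V : Set α} {C r : ℝ≥0} (hr : 0 < r)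
    (h : ∀ a ∈ V, ∀ b ∈ V, dist (F a) (F b) ≤ C * dist (g a) (g b) ^ (r : ℝ)) :
    dimH (F '' V) ≤ dimH (g '' V) / r := by
  classical
  rcases V.eq_empty_or_nonempty with rfl | ⟨a₀, -⟩
  · simp
  have : Nonempty α := ⟨a₀⟩
  set ψ := fun x => F (Function.invFunOn g V x)
  have hψ : ∀ a ∈ V, ψ (g a) = F a := by
    intro a ha
    have hex : ∃ b ∈ V, g b = g a := ⟨a, ha, rfl⟩
    have := h _ (Function.invFunOn_mem hex) a ha
    rwa [Function.invFunOn_eq hex, dist_self, Real.zero_rpow (by positivity), mul_zero,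
      dist_le_zero] at this
  have hψV : HolderOnWith C r ψ (g '' V) := by
    rintro _ ⟨a, ha, rfl⟩ _ ⟨b, hb, rfl⟩
    rw [hψ a ha, hψ b hb, edist_dist, edist_dist, ENNReal.ofReal_rpow_of_nonneg dist_nonneg r.coe_nonneg,
      ← ENNReal.ofReal_coe_nnreal, ← ENNReal.ofReal_mul C.coe_nonneg]
    exact ENNReal.ofReal_le_ofReal (h a ha b hb)
  rw [← Set.image_congr hψ, ← Set.image_image]
  exact hψV.dimH_image_le hr

namespace Renyi

noncomputable def mobius (A : Matrix (Fin 2) (Fin 2) ℤ) (y : ℝ) : ℝ :=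
  (A 0 0 * y + A 0 1) / (A 1 0 * y + A 1 1)

theorem mobius_mul {A B : Matrix (Fin 2) (Fin 2) ℤ} {y : ℝ}
    (hB : (B 1 0 : ℝ) * y + B 1 1 ≠ 0) : mobius (A * B) y = mobius A (mobius B y) := by
  have hY : mobius B y * (B 1 0 * y + B 1 1) = B 0 0 * y + B 0 1 := div_mul_cancel₀ _ hB
  have hnum : ((A * B) 0 0 : ℝ) * y + (A * B) 0 1
      = (A 0 0 * mobius B y + A 0 1) * (B 1 0 * y + B 1 1) := by
    simp only [Matrix.mul_apply, Fin.sum_univ_two, Int.cast_add, Int.cast_mul]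
    linear_combination -(A 0 0 : ℝ) * hY
  have hden : ((A * B) 1 0 : ℝ) * y + (A * B) 1 1
      = (A 1 0 * mobius B y + A 1 1) * (B 1 0 * y + B 1 1) := by
    simp only [Matrix.mul_apply, Fin.sum_univ_two, Int.cast_add, Int.cast_mul]
    linear_combination -(A 1 0 : ℝ) * hY
  rw [mobius, hnum, hden, mul_div_mul_right _ _ hB]
  rfl

theorem mobius_one (y : ℝ) : mobius 1 y = y := by simp [mobius]

theorem mobius_sub_mobius {A : Matrix (Fin 2) (Fin 2) ℤ} (hA : A.det = 1) {u v : ℝ}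
    (hu : (A 1 0 : ℝ) * u + A 1 1 ≠ 0) (hv : (A 1 0 : ℝ) * v + A 1 1 ≠ 0) :
    mobius A v - mobius A u = (v - u) / ((A 1 0 * u + A 1 1) * (A 1 0 * v + A 1 1)) := by
  have hdet : (A 0 0 : ℝ) * A 1 1 - A 0 1 * A 1 0 = 1 := by
    rw [Matrix.det_fin_two] at hA; exact_mod_cast hA
  rw [mobius, mobius, div_sub_div _ _ hv hu, div_eq_div_iff (mul_ne_zero hv hu) (mul_ne_zero hu hv)]
  linear_combination ((A 1 0 * u + A 1 1) * (A 1 0 * v + A 1 1)) * (v - u) * hdet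

/-- The conditions making `mobius A` an increasing map of `[0, 1]` into itself whose slope is
comparable to `(A 1 1)⁻²`; they are kept by right multiplication with the matrices of the digit
blocks `2^k b`, `b ≥ 3`. -/
structure IsCylinderMatrix (A : Matrix (Fin 2) (Fin 2) ℤ) : Prop where
  nonneg₀₀ : 0 ≤ A 0 0
  nonneg₀₁ : 0 ≤ A 0 1
  nonneg₁₀ : 0 ≤ A 1 0
  pos₁₁ : 0 < A 1 1
  det_eq_one : A.det = 1
  le₁₀ : A 1 0 ≤ A 1 1
  lt₀₁ : A 0 1 < A 1 1
  le₀₀ : A 0 0 ≤ A 1 0 + 1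

noncomputable def cylLength (A : Matrix (Fin 2) (Fin 2) ℤ) : ℝ :=
  ((A 1 1 : ℝ) * (A 1 0 + A 1 1))⁻¹

namespace IsCylinderMatrix

variable {A B : Matrix (Fin 2) (Fin 2) ℤ}

theorem one : IsCylinderMatrix 1 := by
  constructor <;> simp

theorem mul (hA : IsCylinderMatrix A) (hB : IsCylinderMatrix B) (hB' : B 0 0 ≤ B 0 1) :
    IsCylinderMatrix (A * B) := by
  obtain ⟨a0, b0, c0, d0, hdA, hca, hbd, hac⟩ := hA
  obtain ⟨a0', b0', c0', d0', hdB, hca', hbd', hac'⟩ := hB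
  refine ⟨?_, ?_, ?_, ?_, by rw [Matrix.det_mul, hdA, hdB, one_mul], ?_, ?_, ?_⟩ <;>
    simp only [Matrix.mul_apply, Fin.sum_univ_two] <;> nlinarith

section

variable (hA : IsCylinderMatrix A)
include hA

theorem denom_pos {y : ℝ} (hy : 0 ≤ y) : 0 < (A 1 0 : ℝ) * y + A 1 1 := by
  have : (0 : ℝ) ≤ A 1 0 := by exact_mod_cast hA.nonneg₁₀
  have : (0 : ℝ) < A 1 1 := by exact_mod_cast hA.pos₁₁
  positivity

theorem mobius_nonneg {y : ℝ} (hy : 0 ≤ y) : 0 ≤ mobius A y := by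
  have : (0 : ℝ) ≤ A 0 0 := by exact_mod_cast hA.nonneg₀₀
  have : (0 : ℝ) ≤ A 0 1 := by exact_mod_cast hA.nonneg₀₁
  exact div_nonneg (by positivity) (hA.denom_pos hy).le

theorem mobius_sub {u v : ℝ} (hu : 0 ≤ u) (hv : 0 ≤ v) :
    mobius A v - mobius A u = (v - u) / ((A 1 0 * u + A 1 1) * (A 1 0 * v + A 1 1)) :=
  mobius_sub_mobius hA.det_eq_one (hA.denom_pos hu).ne' (hA.denom_pos hv).ne'

theorem strictMonoOn_mobius : StrictMonoOn (mobius A) (Set.Ici 0) := fun u hu v hv huv => by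
  have := hA.mobius_sub hu hv
  have := div_pos (sub_pos.2 huv) (mul_pos (hA.denom_pos hu) (hA.denom_pos hv))
  linarith

theorem mobius_le_mobius {u v : ℝ} (hu : 0 ≤ u) (huv : u ≤ v) : mobius A u ≤ mobius A v :=
  hA.strictMonoOn_mobius.monotoneOn hu (hu.trans huv) huv

theorem mobius_lt_mobius {u v : ℝ} (hu : 0 ≤ u) (huv : u < v) : mobius A u < mobius A v :=
  hA.strictMonoOn_mobius hu (hu.trans huv.le) huv

theorem mobius_one_le_one : mobius A 1 ≤ 1 := by
  rw [mobius, div_le_one (by simpa using hA.denom_pos zero_le_one)]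
  have : (A 0 0 : ℝ) + A 0 1 ≤ A 1 0 + A 1 1 := by exact_mod_cast (by linarith [hA.le₀₀, hA.lt₀₁])
  simpa using this

theorem mobius_le_one {y : ℝ} (hy : 0 ≤ y) (hy1 : y ≤ 1) : mobius A y ≤ 1 :=
  (hA.mobius_le_mobius hy hy1).trans hA.mobius_one_le_one

theorem mobius_lt_one {y : ℝ} (hy : 0 ≤ y) (hy1 : y < 1) : mobius A y < 1 :=
  (hA.mobius_lt_mobius hy hy1).trans_le hA.mobius_one_le_one

theorem mobius_one_sub_mobius_zero : mobius A 1 - mobius A 0 = cylLength A := by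
  rw [hA.mobius_sub le_rfl zero_le_one, cylLength]
  simp

theorem cylLength_pos : 0 < cylLength A := by
  have h0 : (0 : ℝ) ≤ A 1 0 := by exact_mod_cast hA.nonneg₁₀
  have hs : (0 : ℝ) < A 1 1 := by exact_mod_cast hA.pos₁₁
  exact inv_pos.2 (mul_pos hs (by linarith))

theorem inv_two_mul_sq_le_cylLength : (2 * (A 1 1 : ℝ) ^ 2)⁻¹ ≤ cylLength A := by
  have h1 : (A 1 0 : ℝ) ≤ A 1 1 := by exact_mod_cast hA.le₁₀
  have h0 : (0 : ℝ) ≤ A 1 0 := by exact_mod_cast hA.nonneg₁₀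
  have hs : (0 : ℝ) < A 1 1 := by exact_mod_cast hA.pos₁₁
  rw [cylLength]
  exact inv_anti₀ (by positivity) (by nlinarith)

theorem mobius_sub_le {u v : ℝ} (hu : 0 ≤ u) (huv : u ≤ v) :
    mobius A v - mobius A u ≤ (v - u) / (A 1 1 : ℝ) ^ 2 := by
  have h0 : (0 : ℝ) ≤ A 1 0 := by exact_mod_cast hA.nonneg₁₀
  have hs : (0 : ℝ) < A 1 1 := by exact_mod_cast hA.pos₁₁
  have hden : (A 1 1 : ℝ) * A 1 1 ≤ (A 1 0 * u + A 1 1) * (A 1 0 * v + A 1 1) :=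
    mul_le_mul (by nlinarith) (by nlinarith) hs.le (hA.denom_pos hu).le
  rw [hA.mobius_sub hu (hu.trans huv), sq]
  exact div_le_div_of_nonneg_left (by linarith) (by positivity) hden

theorem sub_mul_cylLength_div_two_le {u v : ℝ} (hu : 0 ≤ u) (huv : u ≤ v) (hv : v ≤ 1) :
    (v - u) * cylLength A / 2 ≤ mobius A v - mobius A u := by
  have h0 : (0 : ℝ) ≤ A 1 0 := by exact_mod_cast hA.nonneg₁₀
  have hs : (0 : ℝ) < A 1 1 := by exact_mod_cast hA.pos₁₁
  have hrs : (A 1 0 : ℝ) ≤ A 1 1 := by exact_mod_cast hA.le₁₀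
  have hdu := hA.denom_pos hu
  have hdv := hA.denom_pos (hu.trans huv)
  have hden : (A 1 0 * u + A 1 1) * (A 1 0 * v + A 1 1) ≤ 2 * ((A 1 1 : ℝ) * (A 1 0 + A 1 1)) :=
    calc (A 1 0 * u + A 1 1) * (A 1 0 * v + A 1 1) ≤ ((A 1 0 : ℝ) + A 1 1) * (A 1 0 + A 1 1) :=
          mul_le_mul (by nlinarith) (by nlinarith) hdv.le (by positivity)
      _ ≤ 2 * ((A 1 1 : ℝ) * (A 1 0 + A 1 1)) := by nlinarith
  calc (v - u) * cylLength A / 2 = (v - u) / (2 * ((A 1 1 : ℝ) * (A 1 0 + A 1 1))) := by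
        rw [cylLength]; field_simp
    _ ≤ (v - u) / ((A 1 0 * u + A 1 1) * (A 1 0 * v + A 1 1)) :=
        div_le_div_of_nonneg_left (by linarith) (mul_pos hdu hdv) hden
    _ = mobius A v - mobius A u := (hA.mobius_sub hu (hu.trans huv)).symm

theorem continuousAt_mobius {y : ℝ} (hy : 0 ≤ y) : ContinuousAt (mobius A) y :=
  ((continuousAt_const.mul continuousAt_id).add continuousAt_const).div
    ((continuousAt_const.mul continuousAt_id).add continuousAt_const) (hA.denom_pos hy).ne'

end

theorem mobius_mul (hB : IsCylinderMatrix B) {y : ℝ} (hy : 0 ≤ y) :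
    mobius (A * B) y = mobius A (mobius B y) :=
  Renyi.mobius_mul (hB.denom_pos hy).ne'

end IsCylinderMatrix

def digitMatrix (b : ℕ) : Matrix (Fin 2) (Fin 2) ℤ := !![1, (b : ℤ) - 2; 1, (b : ℤ) - 1]

theorem renyi_mobius_digitMatrix {b : ℕ} (hb : 2 ≤ b) {y : ℝ} (hy0 : 0 ≤ y) (hy1 : y < 1) :
    renyi (mobius (digitMatrix b) y) = y := by
  have hb' : (2 : ℝ) ≤ b := by exact_mod_cast hb
  have hinv : 1 / (1 - mobius (digitMatrix b) y) = y + ((b - 1 : ℤ) : ℝ) := by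
    have : y + ((b : ℝ) - 1) ≠ 0 := by linarith
    simp [mobius, digitMatrix]
    rw [one_sub_div (by simpa using this)]
    field_simp
    ring
  rw [renyi, hinv, Int.floor_add_intCast, Int.floor_eq_zero_iff.2 ⟨hy0, hy1⟩]
  push_cast
  ring

def letterMatrix (k b : ℕ) : Matrix (Fin 2) (Fin 2) ℤ := digitMatrix 2 ^ k * digitMatrix b

theorem letterMatrix_succ (k b : ℕ) :
    letterMatrix (k + 1) b = digitMatrix 2 * letterMatrix k b := by
  rw [letterMatrix, letterMatrix, pow_succ', mul_assoc]

theorem letterMatrix_eq (k b : ℕ) :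
    letterMatrix k b = !![1, (b : ℤ) - 2; (k : ℤ) + 1, ((k : ℤ) + 1) * ((b : ℤ) - 2) + 1] := by
  induction k with
  | zero => ext i j; fin_cases i <;> fin_cases j <;> simp [letterMatrix, digitMatrix]; ring
  | succ k ih =>
    rw [letterMatrix_succ, ih, digitMatrix, Matrix.mul_fin_two]
    push_cast
    congr 1; ring_nf

section Letters

variable {k b : ℕ}

theorem isCylinderMatrix_letterMatrix (k : ℕ) (hb : 3 ≤ b) :
    IsCylinderMatrix (letterMatrix k b) := by
  have hb' : (3 : ℤ) ≤ b := by exact_mod_cast hb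
  have hk : (0 : ℤ) ≤ k := by positivity
  rw [letterMatrix_eq]
  constructor <;> simp [Matrix.det_fin_two] <;> nlinarith

theorem IsCylinderMatrix.mul_letterMatrix {A : Matrix (Fin 2) (Fin 2) ℤ} (hA : IsCylinderMatrix A)
    (k : ℕ) (hb : 3 ≤ b) : IsCylinderMatrix (A * letterMatrix k b) :=
  hA.mul (isCylinderMatrix_letterMatrix k hb) (by simp [letterMatrix_eq]; omega)

theorem IsCylinderMatrix.two_mul_le_mul_letterMatrix {A : Matrix (Fin 2) (Fin 2) ℤ}
    (hA : IsCylinderMatrix A) (k : ℕ) (hb : 3 ≤ b) :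
    2 * A 1 1 ≤ (A * letterMatrix k b) 1 1 ∧
      2 * (A 1 0 + A 1 1) ≤ (A * letterMatrix k b) 1 0 + (A * letterMatrix k b) 1 1 := by
  have hb' : (3 : ℤ) ≤ b := by exact_mod_cast hb
  have hk : (0 : ℤ) ≤ k := by positivity
  have h0 := hA.nonneg₁₀
  have hs := hA.pos₁₁
  have h2 : (2 : ℤ) ≤ (k + 1) * (b - 2) + 1 := by nlinarith
  have hrb := mul_le_mul_of_nonneg_left (by linarith : (1 : ℤ) ≤ b - 2) h0
  have hsk := mul_le_mul_of_nonneg_left (by linarith : (1 : ℤ) ≤ k + 1) hs.le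
  have hs2 := mul_le_mul_of_nonneg_left h2 hs.le
  simp only [letterMatrix_eq, Matrix.mul_apply, Fin.sum_univ_two, Matrix.of_apply,
    Matrix.cons_val', Matrix.cons_val_zero, Matrix.cons_val_one, Matrix.empty_val',
    Matrix.cons_val_fin_one]
  constructor <;> nlinarith

theorem IsCylinderMatrix.cylLength_mul_letterMatrix_le {A : Matrix (Fin 2) (Fin 2) ℤ}
    (hA : IsCylinderMatrix A) (k : ℕ) (hb : 3 ≤ b) :
    cylLength (A * letterMatrix k b) ≤ cylLength A / 4 := by
  obtain ⟨hs', hrs'⟩ := hA.two_mul_le_mul_letterMatrix k hb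
  have hs : (0 : ℝ) < A 1 1 := by exact_mod_cast hA.pos₁₁
  have h0 : (0 : ℝ) ≤ A 1 0 := by exact_mod_cast hA.nonneg₁₀
  have hs'' : 2 * (A 1 1 : ℝ) ≤ (A * letterMatrix k b) 1 1 := by exact_mod_cast hs'
  have hrs'' : 2 * ((A 1 0 : ℝ) + A 1 1)
      ≤ (A * letterMatrix k b) 1 0 + (A * letterMatrix k b) 1 1 := by exact_mod_cast hrs'
  rw [cylLength, cylLength, div_eq_mul_inv, ← mul_inv]
  exact inv_anti₀ (by positivity) (by nlinarith)

theorem renyi_iterate_mobius_letterMatrix (hb : 3 ≤ b) {z : ℝ} (hz0 : 0 ≤ z) (hz1 : z < 1)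
    {i : ℕ} (hi : i ≤ k) :
    renyi^[i] (mobius (letterMatrix k b) z) = mobius (letterMatrix (k - i) b) z := by
  induction i with
  | zero => rfl
  | succ i ih =>
    have hL := isCylinderMatrix_letterMatrix (k - (i + 1)) hb
    rw [Function.iterate_succ_apply', ih (by omega), show k - i = k - (i + 1) + 1 by omega,
      letterMatrix_succ, mobius_mul (hL.denom_pos hz0).ne',
      renyi_mobius_digitMatrix le_rfl (hL.mobius_nonneg hz0) (hL.mobius_lt_one hz0 hz1)]

theorem renyi_iterate_succ_mobius_letterMatrix (hb : 3 ≤ b) {z : ℝ} (hz0 : 0 ≤ z)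
    (hz1 : z < 1) : renyi^[k + 1] (mobius (letterMatrix k b) z) = z := by
  rw [Function.iterate_succ_apply', renyi_iterate_mobius_letterMatrix hb hz0 hz1 le_rfl,
    Nat.sub_self, letterMatrix, pow_zero, one_mul, renyi_mobius_digitMatrix (by omega) hz0 hz1]

theorem mobius_letterMatrix_le_one_sub_one_div {N : ℕ} (hb : 3 ≤ b) (hbN : b ≤ N) {z : ℝ}
    (hz0 : 0 ≤ z) (hz1 : z ≤ 1) : mobius (letterMatrix k b) z ≤ 1 - 1 / N := by
  have hb' : (3 : ℝ) ≤ b := by exact_mod_cast hb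
  have hbN' : (b : ℝ) ≤ N := by exact_mod_cast hbN
  cases k with
  | zero =>
    have hpos : (0 : ℝ) < z + (b - 1) := by linarith
    have : mobius (letterMatrix 0 b) z = 1 - 1 / (z + (b - 1)) := by
      rw [one_sub_div hpos.ne']
      simp [mobius, letterMatrix_eq]
      ring_nf
    rw [this]
    gcongr
    linarith
  | succ k =>
    have hL := isCylinderMatrix_letterMatrix k hb
    set y := mobius (letterMatrix k b) z
    have hy0 : 0 ≤ y := hL.mobius_nonneg hz0
    have hy1 : y ≤ 1 := hL.mobius_le_one hz0 hz1
    have hD : ∀ x : ℝ, mobius (digitMatrix 2) x = x / (x + 1) := fun x => by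
      simp [mobius, digitMatrix]
    rw [letterMatrix_succ, mobius_mul (hL.denom_pos hz0).ne', hD, div_le_iff₀ (by linarith)]
    have : 1 / (N : ℝ) ≤ 1 / 3 := by gcongr; linarith
    nlinarith

theorem mobius_letterMatrix_zero (k b : ℕ) :
    mobius (letterMatrix k b) 0 = ((b : ℝ) - 2) / ((k + 1) * (b - 2) + 1) := by
  simp [mobius, letterMatrix_eq]

theorem mobius_letterMatrix_one (k : ℕ) (hb : 2 ≤ b) :
    mobius (letterMatrix k b) 1 = mobius (letterMatrix k (b + 1)) 0 := by
  have hb' : (2 : ℝ) ≤ b := by exact_mod_cast hb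
  have hk : (0 : ℝ) ≤ k := by positivity
  rw [mobius_letterMatrix_zero]
  simp only [mobius, letterMatrix_eq]
  simp
  rw [div_eq_div_iff (by nlinarith) (by nlinarith)]
  ring

theorem mobius_letterMatrix_zero_le_of_le {b' : ℕ} (hb : 3 ≤ b) (hbb' : b ≤ b') :
    mobius (letterMatrix k b) 0 ≤ mobius (letterMatrix k b') 0 := by
  have hb3 : (3 : ℝ) ≤ b := by exact_mod_cast hb
  have hbb : (b : ℝ) ≤ b' := by exact_mod_cast hbb'
  have hk : (0 : ℝ) ≤ k := by positivity
  rw [mobius_letterMatrix_zero, mobius_letterMatrix_zero, div_le_div_iff₀ (by nlinarith)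
    (by nlinarith)]
  nlinarith

theorem mobius_letterMatrix_zero_le_one_div (hb : 2 ≤ b) : mobius (letterMatrix k b) 0 ≤ 1 / (k + 1) := by
  have hb' : (2 : ℝ) ≤ b := by exact_mod_cast hb
  have hk : (0 : ℝ) ≤ k := by positivity
  rw [mobius_letterMatrix_zero, div_le_div_iff₀ (by nlinarith) (by positivity)]
  nlinarith

theorem mobius_letterMatrix_zero_three (k : ℕ) : mobius (letterMatrix k 3) 0 = 1 / (k + 2) := by
  rw [mobius_letterMatrix_zero]
  norm_num
  ring

end Letters

section Alphabet

variable (N : ℕ)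

/-- Letter `i < numLetters N` is the digit block `2^k b` with `k = N - i / (N - 2) ≤ N` and
`3 ≤ b = 3 + i % (N - 2) ≤ N`; increasing indices list the cylinder intervals from left to
right. -/
def letterK (i : ℕ) : ℕ := N - i / (N - 2)

def letterB (i : ℕ) : ℕ := 3 + i % (N - 2)

def numLetters : ℕ := (N + 1) * (N - 2)

def letter (i : ℕ) : Matrix (Fin 2) (Fin 2) ℤ := letterMatrix (letterK N i) (letterB N i)

theorem isCylinderMatrix_letter (i : ℕ) : IsCylinderMatrix (letter N i) :=
  isCylinderMatrix_letterMatrix _ (Nat.le_add_right 3 _)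

variable {N}

theorem one_sub_one_div_nonneg : (0 : ℝ) ≤ 1 - 1 / N :=
  sub_nonneg.2 ((one_div (N : ℝ)).symm ▸ Nat.cast_inv_le_one N)

theorem three_le_letterB (i : ℕ) : 3 ≤ letterB N i := Nat.le_add_right 3 _

theorem letterB_le (hN : 3 ≤ N) (i : ℕ) : letterB N i ≤ N := by
  have := Nat.mod_lt i (show 0 < N - 2 by omega)
  unfold letterB
  omega

theorem numLetters_pos (hN : 3 ≤ N) : 0 < numLetters N :=
  Nat.mul_pos (by omega) (by omega)

theorem IsCylinderMatrix.mul_letter {A : Matrix (Fin 2) (Fin 2) ℤ} (hA : IsCylinderMatrix A)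
    (N i : ℕ) : IsCylinderMatrix (A * letter N i) :=
  hA.mul_letterMatrix _ (three_le_letterB i)

theorem mobius_letter_le_one_sub_one_div (hN : 3 ≤ N) (i : ℕ) {z : ℝ} (hz0 : 0 ≤ z) (hz1 : z ≤ 1) :
    mobius (letter N i) z ≤ 1 - 1 / N :=
  mobius_letterMatrix_le_one_sub_one_div (three_le_letterB i) (letterB_le hN i) hz0 hz1

theorem mobius_letter_zero_pos (i : ℕ) : 0 < mobius (letter N i) 0 := by
  have hb : (3 : ℝ) ≤ letterB N i := by exact_mod_cast three_le_letterB i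
  have hk : (0 : ℝ) ≤ letterK N i := by positivity
  rw [letter, mobius_letterMatrix_zero]
  exact div_pos (by linarith) (by nlinarith)

theorem mobius_letter_one_le_mobius_letter_zero {i j : ℕ} (hij : i < j)
    (hj : j < numLetters N) : mobius (letter N i) 1 ≤ mobius (letter N j) 0 := by
  have hi3 := three_le_letterB (N := N) i
  rw [letter, letter, mobius_letterMatrix_one _ (by omega)]
  have hqj : j / (N - 2) < N + 1 := Nat.div_lt_of_lt_mul (by rwa [numLetters, mul_comm] at hj)
  have hq : i / (N - 2) ≤ j / (N - 2) := Nat.div_le_div_right hij.le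
  have := Nat.div_add_mod i (N - 2)
  have := Nat.div_add_mod j (N - 2)
  rcases hq.eq_or_lt with hq | hq
  · have hk : letterK N i = letterK N j := by unfold letterK; omega
    have hb : letterB N i + 1 ≤ letterB N j := by
      unfold letterB
      have : (N - 2) * (i / (N - 2)) = (N - 2) * (j / (N - 2)) := by rw [hq]
      omega
    rw [hk]
    exact mobius_letterMatrix_zero_le_of_le (by omega) hb
  · have hk : letterK N j + 1 ≤ letterK N i := by unfold letterK; omega
    have hk' : (letterK N j : ℝ) + 2 ≤ letterK N i + 1 := by exact_mod_cast (by omega)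
    calc mobius (letterMatrix (letterK N i) (letterB N i + 1)) 0
        ≤ 1 / (letterK N i + 1) := mobius_letterMatrix_zero_le_one_div (by omega)
      _ ≤ 1 / (letterK N j + 2) := by gcongr
      _ = mobius (letterMatrix (letterK N j) 3) 0 := (mobius_letterMatrix_zero_three _).symm
      _ ≤ _ := mobius_letterMatrix_zero_le_of_le le_rfl (three_le_letterB j)

theorem letter_one_one_le (hN : 3 ≤ N) (i : ℕ) : letter N i 1 1 ≤ (N : ℤ) ^ 2 := by
  have hk : (letterK N i : ℤ) ≤ N := by exact_mod_cast Nat.sub_le _ _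
  have hb : (letterB N i : ℤ) ≤ N := by exact_mod_cast letterB_le hN i
  have hb3 : (3 : ℤ) ≤ letterB N i := by exact_mod_cast three_le_letterB i
  have hk0 : (0 : ℤ) ≤ letterK N i := by positivity
  simp only [letter, letterMatrix_eq, Matrix.of_apply, Matrix.cons_val', Matrix.cons_val_one,
    Matrix.cons_val_fin_one, Matrix.empty_val']
  nlinarith

/-- Coded points lie below `1 - 1 / N`, so in the interval of the letter `i` they keep this
distance from its right end. -/
theorem one_div_le_mobius_letter_one_sub (hN : 3 ≤ N) (i : ℕ) :
    1 / (4 * (N : ℝ) ^ 5) ≤ mobius (letter N i) 1 - mobius (letter N i) (1 - 1 / N) := by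
  have hB := isCylinderMatrix_letter N i
  have hN' : (3 : ℝ) ≤ N := by exact_mod_cast hN
  have hu0 : (0 : ℝ) ≤ 1 - 1 / N := one_sub_one_div_nonneg
  have hs : (letter N i 1 1 : ℝ) ≤ N ^ 2 := by exact_mod_cast letter_one_one_le hN i
  have hrs : (letter N i 1 0 : ℝ) ≤ letter N i 1 1 := by exact_mod_cast hB.le₁₀
  have hr0 : (0 : ℝ) ≤ letter N i 1 0 := by exact_mod_cast hB.nonneg₁₀
  have hd1 : (letter N i 1 0 : ℝ) * (1 - 1 / N) + letter N i 1 1 ≤ 2 * N ^ 2 := by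
    nlinarith [mul_nonneg hr0 (by positivity : (0 : ℝ) ≤ 1 / N)]
  have hd2 : (letter N i 1 0 : ℝ) * 1 + letter N i 1 1 ≤ 2 * N ^ 2 := by linarith
  rw [hB.mobius_sub hu0 zero_le_one, sub_sub_cancel, div_div, one_div_le_one_div (by positivity)
    (by have := hB.denom_pos hu0; have := hB.denom_pos zero_le_one; positivity)]
  calc (N : ℝ) * ((letter N i 1 0 * (1 - 1 / N) + letter N i 1 1) * (letter N i 1 0 * 1 + letter N i 1 1))
      ≤ N * ((2 * N ^ 2) * (2 * N ^ 2)) := by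
        gcongr
        exact (hB.denom_pos zero_le_one).le
    _ = 4 * N ^ 5 := by ring

end Alphabet

section Coverage

open Finset

variable {N : ℕ}

theorem sum_range_letter_length_eq (hN : 3 ≤ N) :
    ∑ i ∈ range (numLetters N), (mobius (letter N i) 1 - mobius (letter N i) 0)
      = ∑ k ∈ range (N + 1), (mobius (letterMatrix k (N + 1)) 0 - 1 / (k + 2)) := by
  rw [numLetters, sum_range_mul_eq_sum_sum, ← sum_range_reflect]
  refine sum_congr rfl fun j hj => ?_
  rw [Finset.mem_range] at hj
  have hblock : ∀ r ∈ range (N - 2),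
      mobius (letter N ((N + 1 - 1 - j) * (N - 2) + r)) 1
        - mobius (letter N ((N + 1 - 1 - j) * (N - 2) + r)) 0
      = mobius (letterMatrix j (3 + (r + 1))) 0 - mobius (letterMatrix j (3 + r)) 0 := by
    intro r hr
    rw [Finset.mem_range] at hr
    have hd : 0 < N - 2 := by omega
    rw [letter, letterK, letterB, mul_comm, Nat.mul_add_div hd, Nat.div_eq_of_lt hr,
      Nat.mul_add_mod, Nat.mod_eq_of_lt hr, show N - (N + 1 - 1 - j + 0) = j by omega,
      mobius_letterMatrix_one _ (by omega), add_assoc]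
  rw [sum_congr rfl hblock, sum_range_sub (fun r => mobius (letterMatrix j (3 + r)) 0),
    show 3 + (N - 2) = N + 1 by omega, add_zero, mobius_letterMatrix_zero_three]

theorem one_sub_mul_le_mobius_letterMatrix_zero_sub (hN : 3 ≤ N) (k : ℕ) :
    (1 - 2 / ((N : ℝ) - 1)) * (1 / ((k : ℝ) + 1) - 1 / (k + 2))
      ≤ mobius (letterMatrix k (N + 1)) 0 - 1 / (k + 2) := by
  have hN' : (3 : ℝ) ≤ N := by exact_mod_cast hN
  have hk : (0 : ℝ) ≤ k := by positivity
  have hk1 : (k : ℝ) + 1 ≠ 0 := by positivity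
  have hD : (0 : ℝ) < (k + 1) * (N - 1) + 1 := by nlinarith
  have hL : mobius (letterMatrix k (N + 1)) 0
      = 1 / ((k : ℝ) + 1) - 1 / ((k + 1) * ((k + 1) * (N - 1) + 1)) := by
    rw [mobius_letterMatrix_zero, eq_sub_iff_add_eq, div_add_div _ _ (by push_cast; linarith)
      (mul_ne_zero hk1 hD.ne'), div_eq_div_iff (mul_ne_zero (by push_cast; linarith)
      (mul_ne_zero hk1 hD.ne')) hk1]
    push_cast
    ring
  have hdefect : 1 / (((k : ℝ) + 1) * ((k + 1) * (N - 1) + 1))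
      ≤ 2 / ((N : ℝ) - 1) * (1 / ((k : ℝ) + 1) - 1 / (k + 2)) := by
    rw [show 2 / ((N : ℝ) - 1) * (1 / ((k : ℝ) + 1) - 1 / (k + 2))
        = 2 / ((N - 1) * ((k + 1) * (k + 2))) by field_simp; ring,
      div_le_div_iff₀ (by positivity) (by nlinarith)]
    nlinarith
  rw [hL]
  linarith

theorem sum_range_one_div_sub_one_div (n : ℕ) :
    ∑ k ∈ range n, (1 / ((k : ℝ) + 1) - 1 / (k + 2)) = 1 - 1 / ((n : ℝ) + 1) := by
  have := sum_range_sub' (fun k : ℕ => 1 / ((k : ℝ) + 1)) n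
  push_cast at this
  simp only [add_assoc, one_add_one_eq_two] at this
  rw [this]
  norm_num

theorem one_sub_le_sum_range_letter_length (hN : 3 ≤ N) :
    1 - 3 / ((N : ℝ) - 1)
      ≤ ∑ i ∈ range (numLetters N), (mobius (letter N i) 1 - mobius (letter N i) 0) := by
  have hN' : (3 : ℝ) ≤ N := by exact_mod_cast hN
  rw [sum_range_letter_length_eq hN]
  refine le_trans ?_ (sum_le_sum fun k _ => one_sub_mul_le_mobius_letterMatrix_zero_sub hN k)
  rw [← mul_sum, sum_range_one_div_sub_one_div]
  push_cast
  have : 1 / ((N : ℝ) + 1 + 1) ≤ 1 / ((N : ℝ) - 1) := by gcongr <;> linarith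
  have : 0 ≤ 2 / ((N : ℝ) - 1) * (1 / ((N : ℝ) + 1 + 1)) := by
    have : (0 : ℝ) ≤ 2 / ((N : ℝ) - 1) := div_nonneg zero_le_two (by linarith)
    positivity
  have : 2 / ((N : ℝ) - 1) + 1 / ((N : ℝ) - 1) = 3 / ((N : ℝ) - 1) := by ring
  nlinarith

theorem IsCylinderMatrix.cylLength_sub_sum_le {A : Matrix (Fin 2) (Fin 2) ℤ}
    (hA : IsCylinderMatrix A) :
    cylLength A - ∑ i ∈ range (numLetters N), cylLength (A * letter N i)
      ≤ (1 - ∑ i ∈ range (numLetters N), (mobius (letter N i) 1 - mobius (letter N i) 0))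
        / (A 1 1 : ℝ) ^ 2 := by
  have hmono : MonotoneOn (fun u => u / (A 1 1 : ℝ) ^ 2 - mobius A u) (Set.Icc 0 1) :=
    fun u hu v _ huv => by
      have := hA.mobius_sub_le hu.1 huv
      rw [sub_div] at this
      linarith
  have hsum := hmono.sum_sub_le_of_sorted zero_le_one (a := fun i => mobius (letter N i) 0)
    (b := fun i => mobius (letter N i) 1) (n := numLetters N)
    (fun i _ => (isCylinderMatrix_letter N i).mobius_le_mobius le_rfl zero_le_one)
    (fun i j hij hj => mobius_letter_one_le_mobius_letter_zero hij hj)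
    (fun i _ => (isCylinderMatrix_letter N i).mobius_nonneg le_rfl)
    (fun i _ => (isCylinderMatrix_letter N i).mobius_le_one zero_le_one le_rfl)
  have hterm : ∀ i ∈ range (numLetters N),
      (mobius (letter N i) 1 / (A 1 1 : ℝ) ^ 2 - mobius A (mobius (letter N i) 1))
        - (mobius (letter N i) 0 / (A 1 1 : ℝ) ^ 2 - mobius A (mobius (letter N i) 0))
      = (mobius (letter N i) 1 - mobius (letter N i) 0) / (A 1 1 : ℝ) ^ 2
        - cylLength (A * letter N i) := by
    intro i _
    rw [← (hA.mul_letter N i).mobius_one_sub_mobius_zero,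
      (isCylinderMatrix_letter N i).mobius_mul zero_le_one,
      (isCylinderMatrix_letter N i).mobius_mul le_rfl]
    ring
  rw [sum_congr rfl hterm, sum_sub_distrib, ← sum_div, zero_div] at hsum
  rw [sub_div, ← hA.mobius_one_sub_mobius_zero]
  linarith

/-- The gaps between the children of a cylinder are short, because `mobius A` contracts by at
least `(A 1 1)⁻²` and the letter intervals leave a set of length at most `3 / (N - 1)` uncovered. -/
theorem IsCylinderMatrix.one_sub_mul_cylLength_le_sum {A : Matrix (Fin 2) (Fin 2) ℤ}
    (hA : IsCylinderMatrix A) (hN : 3 ≤ N) :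
    (1 - 6 / ((N : ℝ) - 1)) * cylLength A ≤ ∑ i ∈ range (numLetters N), cylLength (A * letter N i) := by
  have hN' : (3 : ℝ) ≤ N := by exact_mod_cast hN
  have hgaps := hA.cylLength_sub_sum_le (N := N)
  have hcover := one_sub_le_sum_range_letter_length hN
  have hs : (0 : ℝ) < (A 1 1 : ℝ) ^ 2 := pow_pos (by exact_mod_cast hA.pos₁₁) 2
  have hs2 : 1 / (A 1 1 : ℝ) ^ 2 ≤ 2 * cylLength A := by
    have := hA.inv_two_mul_sq_le_cylLength
    rw [mul_inv] at this
    rw [one_div]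
    linarith
  have h3 : 0 ≤ 3 / ((N : ℝ) - 1) := div_nonneg zero_le_three (by linarith)
  have : (1 - ∑ i ∈ range (numLetters N), (mobius (letter N i) 1 - mobius (letter N i) 0))
      / (A 1 1 : ℝ) ^ 2 ≤ 3 / ((N : ℝ) - 1) * (2 * cylLength A) := by
    rw [div_eq_mul_one_div]
    exact mul_le_mul (by linarith) hs2 (by positivity) h3
  have h6 : 6 / ((N : ℝ) - 1) = 3 / ((N : ℝ) - 1) * 2 := by ring
  rw [h6]
  linarith

end Coverage

section Coding

variable (N : ℕ)

def prefixMatrix (ω : ℕ → ℕ) : ℕ → Matrix (Fin 2) (Fin 2) ℤ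
  | 0 => 1
  | n + 1 => prefixMatrix ω n * letter N (ω n)

noncomputable def codePoint (ω : ℕ → ℕ) : ℝ := ⨆ n, mobius (prefixMatrix N ω n) 0

theorem isCylinderMatrix_prefixMatrix (ω : ℕ → ℕ) (n : ℕ) :
    IsCylinderMatrix (prefixMatrix N ω n) := by
  induction n with
  | zero => exact .one
  | succ n ih => exact ih.mul_letter N _

variable {N}

theorem prefixMatrix_succ' (ω : ℕ → ℕ) (n : ℕ) :
    prefixMatrix N ω (n + 1) = letter N (ω 0) * prefixMatrix N (fun m => ω (m + 1)) n := by
  induction n with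
  | zero => simp [prefixMatrix]
  | succ n ih => rw [prefixMatrix, ih, prefixMatrix, mul_assoc]

theorem prefixMatrix_congr {ω ω' : ℕ → ℕ} {n : ℕ} (h : ∀ k < n, ω k = ω' k) :
    prefixMatrix N ω n = prefixMatrix N ω' n := by
  induction n with
  | zero => rfl
  | succ n ih => rw [prefixMatrix, prefixMatrix, ih fun k hk => h k (by omega), h n n.lt_succ_self]

theorem cylLength_prefixMatrix_le (ω : ℕ → ℕ) (n : ℕ) :
    cylLength (prefixMatrix N ω n) ≤ (1 / 4) ^ n := by
  induction n with
  | zero => simp [prefixMatrix, cylLength]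
  | succ n ih =>
    calc cylLength (prefixMatrix N ω (n + 1)) ≤ cylLength (prefixMatrix N ω n) / 4 :=
          (isCylinderMatrix_prefixMatrix N ω n).cylLength_mul_letterMatrix_le _ (three_le_letterB _)
      _ ≤ (1 / 4) ^ (n + 1) := by rw [pow_succ]; linarith

theorem two_pow_le_prefixMatrix_row (ω : ℕ → ℕ) (n : ℕ) :
    2 ^ n ≤ prefixMatrix N ω n 1 0 + prefixMatrix N ω n 1 1 := by
  induction n with
  | zero => simp [prefixMatrix]
  | succ n ih =>
    have := ((isCylinderMatrix_prefixMatrix N ω n).two_mul_le_mul_letterMatrix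
      (letterK N (ω n)) (three_le_letterB (N := N) (ω n))).2
    rw [pow_succ, prefixMatrix, letter]
    exact (by linarith : 2 ^ n * 2 ≤ 2 * (prefixMatrix N ω n 1 0 + prefixMatrix N ω n 1 1)).trans this

theorem strictMono_mobius_prefixMatrix_zero (ω : ℕ → ℕ) :
    StrictMono fun n => mobius (prefixMatrix N ω n) 0 := strictMono_nat_of_lt_succ fun n => by
  rw [prefixMatrix, (isCylinderMatrix_letter N _).mobius_mul le_rfl]
  exact (isCylinderMatrix_prefixMatrix N ω n).mobius_lt_mobius le_rfl (mobius_letter_zero_pos _)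

section

variable (hN : 3 ≤ N) (ω : ℕ → ℕ)
include hN

theorem mobius_prefixMatrix_zero_le (n : ℕ) : mobius (prefixMatrix N ω n) 0 ≤ 1 - 1 / N := by
  cases n with
  | zero => simpa [prefixMatrix, mobius_one] using one_sub_one_div_nonneg
  | succ n =>
    have hP := isCylinderMatrix_prefixMatrix N (fun m => ω (m + 1)) n
    rw [prefixMatrix_succ', hP.mobius_mul le_rfl]
    exact mobius_letter_le_one_sub_one_div hN _ (hP.mobius_nonneg le_rfl)
      (hP.mobius_le_one le_rfl zero_le_one)

theorem bddAbove_range_mobius_prefixMatrix :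
    BddAbove (Set.range fun n => mobius (prefixMatrix N ω n) 0) :=
  ⟨_, Set.forall_mem_range.2 (mobius_prefixMatrix_zero_le hN ω)⟩

theorem mobius_prefixMatrix_zero_lt_codePoint (n : ℕ) :
    mobius (prefixMatrix N ω n) 0 < codePoint N ω :=
  (strictMono_mobius_prefixMatrix_zero ω n.lt_succ_self).trans_le
    (le_ciSup (bddAbove_range_mobius_prefixMatrix hN ω) (n + 1))

theorem codePoint_pos : 0 < codePoint N ω := by
  simpa [prefixMatrix, mobius_one] using mobius_prefixMatrix_zero_lt_codePoint hN ω 0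

theorem codePoint_le : codePoint N ω ≤ 1 - 1 / N :=
  ciSup_le (mobius_prefixMatrix_zero_le hN ω)

theorem codePoint_lt_one : codePoint N ω < 1 := by
  have : (0 : ℝ) < N := by exact_mod_cast (by omega : 0 < N)
  have : (0 : ℝ) < 1 / N := by positivity
  linarith [codePoint_le hN ω]

theorem tendsto_mobius_prefixMatrix_zero :
    Filter.Tendsto (fun n => mobius (prefixMatrix N ω n) 0) Filter.atTop (nhds (codePoint N ω)) :=
  tendsto_atTop_ciSup (strictMono_mobius_prefixMatrix_zero ω).monotone
    (bddAbove_range_mobius_prefixMatrix hN ω)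

theorem codePoint_eq_mobius_letter :
    codePoint N ω = mobius (letter N (ω 0)) (codePoint N fun m => ω (m + 1)) := by
  have hlim := ((isCylinderMatrix_letter N (ω 0)).continuousAt_mobius
    (codePoint_pos hN fun m => ω (m + 1)).le).tendsto.comp
    (tendsto_mobius_prefixMatrix_zero hN fun m => ω (m + 1))
  refine tendsto_nhds_unique ((tendsto_mobius_prefixMatrix_zero hN ω).comp
    (Filter.tendsto_add_atTop_nat 1)) (hlim.congr fun n => ?_)
  rw [Function.comp_apply, Function.comp_apply, prefixMatrix_succ',
    (isCylinderMatrix_prefixMatrix N _ n).mobius_mul le_rfl]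

theorem codePoint_le_mobius_prefixMatrix (n : ℕ) :
    codePoint N ω ≤ mobius (prefixMatrix N ω n) (1 - 1 / N) := by
  induction n generalizing ω with
  | zero => simpa [prefixMatrix, mobius_one] using codePoint_le hN ω
  | succ n ih =>
    have hP := isCylinderMatrix_prefixMatrix N (fun m => ω (m + 1)) n
    rw [codePoint_eq_mobius_letter hN ω, prefixMatrix_succ',
      hP.mobius_mul one_sub_one_div_nonneg]
    exact (isCylinderMatrix_letter N _).mobius_le_mobius (codePoint_pos hN _).le (ih _)

theorem renyi_iterate_codePoint_mem (j : ℕ) :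
    renyi^[j] (codePoint N ω) ∈ Set.Icc (0 : ℝ) (1 - 1 / N) := by
  induction j using Nat.strong_induction_on generalizing ω with
  | _ j ih =>
  have hb := three_le_letterB (N := N) (ω 0)
  have hy0 := (codePoint_pos hN fun m => ω (m + 1)).le
  have hy1 := codePoint_lt_one hN fun m => ω (m + 1)
  rw [codePoint_eq_mobius_letter hN ω, letter]
  rcases le_or_gt j (letterK N (ω 0)) with hj | hj
  · rw [renyi_iterate_mobius_letterMatrix hb hy0 hy1 hj]
    exact ⟨(isCylinderMatrix_letterMatrix _ hb).mobius_nonneg hy0,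
      mobius_letterMatrix_le_one_sub_one_div hb (letterB_le hN _) hy0 hy1.le⟩
  · obtain ⟨i, rfl⟩ : ∃ i, j = i + (letterK N (ω 0) + 1) := ⟨j - (letterK N (ω 0) + 1), by omega⟩
    rw [Function.iterate_add_apply, renyi_iterate_succ_mobius_letterMatrix hb hy0 hy1]
    exact ih i (by omega) _

theorem bcf_codePoint_le (j : ℕ) : bcf j (codePoint N ω) ≤ N + 1 := by
  obtain ⟨-, ht⟩ := renyi_iterate_codePoint_mem hN ω (j - 1)
  have hN' : (0 : ℝ) < N := by exact_mod_cast (by omega : 0 < N)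
  have hpos : 1 / (N : ℝ) ≤ 1 - renyi^[j - 1] (codePoint N ω) := by linarith
  have hle : 1 / (1 - renyi^[j - 1] (codePoint N ω)) ≤ (N : ℝ) := by
    rw [div_le_iff₀ ((by positivity : (0 : ℝ) < 1 / N).trans_le hpos)]
    rw [div_le_iff₀ hN'] at hpos
    linarith
  have := Int.floor_le_floor hle
  rw [Int.floor_natCast] at this
  rw [bcf]
  omega

theorem irrational_codePoint : Irrational (codePoint N ω) := by
  refine irrational_of_forall_exists_approx fun c hc0 => ?_
  obtain ⟨n, hn⟩ : ∃ n, c < 2 ^ n := ⟨c, Nat.lt_two_pow_self⟩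
  have hA := isCylinderMatrix_prefixMatrix N ω n
  have hrow := two_pow_le_prefixMatrix_row (N := N) ω n
  set A := prefixMatrix N ω n
  have hs : (0 : ℝ) < A 1 1 := by exact_mod_cast hA.pos₁₁
  have hc : (c : ℝ) ≤ A 1 0 + A 1 1 := by
    have : (c : ℤ) < 2 ^ n := by exact_mod_cast hn
    exact_mod_cast (by omega : (c : ℤ) ≤ A 1 0 + A 1 1)
  have hN' : (0 : ℝ) < N := by exact_mod_cast (by omega : 0 < N)
  have : (0 : ℝ) < 1 / N := by positivity
  have hmob0 : mobius A 0 = A 0 1 / A 1 1 := by simp [mobius]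
  refine ⟨A 0 1, A 1 1, hA.pos₁₁, hmob0 ▸ mobius_prefixMatrix_zero_lt_codePoint hN ω n, ?_⟩
  calc codePoint N ω ≤ mobius A (1 - 1 / N) := codePoint_le_mobius_prefixMatrix hN ω n
    _ < mobius A 1 := hA.mobius_lt_mobius one_sub_one_div_nonneg (by linarith)
    _ = A 0 1 / A 1 1 + cylLength A := by rw [← hmob0, ← hA.mobius_one_sub_mobius_zero]; ring
    _ ≤ A 0 1 / A 1 1 + 1 / (c * A 1 1) := by
        rw [cylLength, ← one_div, mul_comm (c : ℝ)]
        have : (0 : ℝ) < c := by exact_mod_cast hc0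
        gcongr

end

theorem cylLength_div_le_codePoint_sub (hN : 3 ≤ N) {ω ω' : ℕ → ℕ} {n : ℕ}
    (hpre : ∀ k < n, ω k = ω' k) (hlt : ω n < ω' n) (hM : ω' n < numLetters N) :
    cylLength (prefixMatrix N ω n) / (8 * (N : ℝ) ^ 5) ≤ codePoint N ω' - codePoint N ω := by
  have hA := isCylinderMatrix_prefixMatrix N ω n
  have hN' : (0 : ℝ) < N := by exact_mod_cast (by omega : 0 < N)
  have hu0 : (0 : ℝ) ≤ 1 - 1 / N := one_sub_one_div_nonneg
  set a := mobius (letter N (ω n)) (1 - 1 / N)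
  set a' := mobius (letter N (ω' n)) 0
  have hgap : 1 / (4 * (N : ℝ) ^ 5) ≤ a' - a := by
    have := mobius_letter_one_le_mobius_letter_zero (N := N) hlt hM
    have := one_div_le_mobius_letter_one_sub hN (ω n)
    linarith
  have hup : codePoint N ω ≤ mobius (prefixMatrix N ω n) a := by
    have := codePoint_le_mobius_prefixMatrix hN ω (n + 1)
    rwa [prefixMatrix, (isCylinderMatrix_letter N _).mobius_mul hu0] at this
  have hlow : mobius (prefixMatrix N ω n) a' ≤ codePoint N ω' := by
    have := (mobius_prefixMatrix_zero_lt_codePoint hN ω' (n + 1)).le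
    rwa [prefixMatrix, (isCylinderMatrix_letter N _).mobius_mul le_rfl,
      ← prefixMatrix_congr hpre] at this
  have hγ : (0 : ℝ) < 1 / (4 * (N : ℝ) ^ 5) := by positivity
  have haa' : a ≤ a' := by linarith
  have hmid := hA.sub_mul_cylLength_div_two_le ((isCylinderMatrix_letter N _).mobius_nonneg hu0)
    haa' ((isCylinderMatrix_letter N _).mobius_le_one le_rfl zero_le_one)
  have hlen := hA.cylLength_pos
  calc cylLength (prefixMatrix N ω n) / (8 * (N : ℝ) ^ 5)
      = 1 / (4 * (N : ℝ) ^ 5) * cylLength (prefixMatrix N ω n) / 2 := by field_simp; ring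
    _ ≤ (a' - a) * cylLength (prefixMatrix N ω n) / 2 := by gcongr
    _ ≤ codePoint N ω' - codePoint N ω := by linarith

end Coding

section Mass

open Finset

variable (N : ℕ)

noncomputable def childLengthSum (A : Matrix (Fin 2) (Fin 2) ℤ) : ℝ :=
  ∑ i ∈ range (numLetters N), cylLength (A * letter N i)

noncomputable def childWeight (A : Matrix (Fin 2) (Fin 2) ℤ) (i : ℕ) : ℝ :=
  cylLength (A * letter N i) / childLengthSum N A

/-- The mass of the `n`-cylinder of `ω` under the measure that shares the mass of every cylinder
among its children in proportion to their lengths. -/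
noncomputable def cylMass (ω : ℕ → ℕ) : ℕ → ℝ
  | 0 => 1
  | n + 1 => cylMass ω n * childWeight N (prefixMatrix N ω n) (ω n)

/-- The mass lying to the left of the `n`-cylinder of `ω`. -/
noncomputable def massLeft (ω : ℕ → ℕ) : ℕ → ℝ
  | 0 => 0
  | n + 1 => massLeft ω n + cylMass N ω n * ∑ i ∈ range (ω n), childWeight N (prefixMatrix N ω n) i

noncomputable def massPoint (ω : ℕ → ℕ) : ℝ := ⨆ n, massLeft N ω n

variable {N}

theorem IsCylinderMatrix.childLengthSum_pos {A : Matrix (Fin 2) (Fin 2) ℤ}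
    (hA : IsCylinderMatrix A) (hN : 3 ≤ N) : 0 < childLengthSum N A :=
  sum_pos (fun i _ => (hA.mul_letter N i).cylLength_pos) (nonempty_range_iff.2 (numLetters_pos hN).ne')

theorem IsCylinderMatrix.childWeight_nonneg {A : Matrix (Fin 2) (Fin 2) ℤ}
    (hA : IsCylinderMatrix A) (i : ℕ) : 0 ≤ childWeight N A i :=
  div_nonneg (hA.mul_letter N i).cylLength_pos.le
    (sum_nonneg fun i _ => (hA.mul_letter N i).cylLength_pos.le)

theorem IsCylinderMatrix.sum_childWeight {A : Matrix (Fin 2) (Fin 2) ℤ}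
    (hA : IsCylinderMatrix A) (hN : 3 ≤ N) :
    ∑ i ∈ range (numLetters N), childWeight N A i = 1 := by
  simp only [childWeight, ← sum_div]
  exact div_self (hA.childLengthSum_pos hN).ne'

theorem IsCylinderMatrix.sum_childWeight_le {A : Matrix (Fin 2) (Fin 2) ℤ}
    (hA : IsCylinderMatrix A) (hN : 3 ≤ N) {j : ℕ} (hj : j ≤ numLetters N) :
    ∑ i ∈ range j, childWeight N A i ≤ 1 :=
  hA.sum_childWeight hN ▸ sum_le_sum_of_subset_of_nonneg (range_subset_range.2 hj)
    fun i _ _ => hA.childWeight_nonneg i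

theorem cylMass_nonneg (ω : ℕ → ℕ) (n : ℕ) : 0 ≤ cylMass N ω n := by
  induction n with
  | zero => exact zero_le_one
  | succ n ih => exact mul_nonneg ih ((isCylinderMatrix_prefixMatrix N ω n).childWeight_nonneg _)

theorem massLeft_mono (ω : ℕ → ℕ) : Monotone (massLeft N ω) :=
  monotone_nat_of_le_succ fun n => le_add_of_nonneg_right <| mul_nonneg (cylMass_nonneg ω n)
    (sum_nonneg fun i _ => (isCylinderMatrix_prefixMatrix N ω n).childWeight_nonneg i)

theorem massLeft_add_cylMass_succ (ω : ℕ → ℕ) (n : ℕ) :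
    massLeft N ω (n + 1) + cylMass N ω (n + 1)
      = massLeft N ω n + cylMass N ω n * ∑ i ∈ range (ω n + 1), childWeight N (prefixMatrix N ω n) i := by
  rw [massLeft, cylMass, sum_range_succ]
  ring

theorem antitone_massLeft_add_cylMass (hN : 3 ≤ N) {ω : ℕ → ℕ} (hω : ∀ n, ω n < numLetters N) :
    Antitone fun n => massLeft N ω n + cylMass N ω n :=
  antitone_nat_of_succ_le fun n => by
    rw [massLeft_add_cylMass_succ, add_le_add_iff_left]
    exact mul_le_of_le_one_right (cylMass_nonneg ω n)
      ((isCylinderMatrix_prefixMatrix N ω n).sum_childWeight_le hN (hω n))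

variable (hN : 3 ≤ N) {ω : ℕ → ℕ} (hω : ∀ n, ω n < numLetters N)
include hN hω

theorem massLeft_le_massPoint (n : ℕ) : massLeft N ω n ≤ massPoint N ω :=
  le_ciSup ⟨massLeft N ω 0 + cylMass N ω 0, Set.forall_mem_range.2 fun m =>
    (le_add_of_nonneg_right (cylMass_nonneg ω m)).trans
      (antitone_massLeft_add_cylMass hN hω (Nat.zero_le m))⟩ n

theorem massPoint_le_massLeft_add_cylMass (n : ℕ) :
    massPoint N ω ≤ massLeft N ω n + cylMass N ω n := by
  refine ciSup_le fun m => ?_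
  rcases le_total m n with hmn | hnm
  · exact (massLeft_mono ω hmn).trans (le_add_of_nonneg_right (cylMass_nonneg ω n))
  · exact (le_add_of_nonneg_right (cylMass_nonneg ω m)).trans
      (antitone_massLeft_add_cylMass hN hω hnm)

end Mass

section MassEstimates

open Finset

variable {N : ℕ}

theorem cylMass_congr {ω ω' : ℕ → ℕ} {n : ℕ} (h : ∀ k < n, ω k = ω' k) :
    cylMass N ω n = cylMass N ω' n := by
  induction n with
  | zero => rfl
  | succ n ih =>
    rw [cylMass, cylMass, ih fun k hk => h k (by omega), prefixMatrix_congr fun k hk => h k (by omega),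
      h n n.lt_succ_self]

theorem massLeft_congr {ω ω' : ℕ → ℕ} {n : ℕ} (h : ∀ k < n, ω k = ω' k) :
    massLeft N ω n = massLeft N ω' n := by
  induction n with
  | zero => rfl
  | succ n ih =>
    rw [massLeft, massLeft, ih fun k hk => h k (by omega), cylMass_congr fun k hk => h k (by omega),
      prefixMatrix_congr fun k hk => h k (by omega), h n n.lt_succ_self]

theorem abs_massPoint_sub_le_cylMass (hN : 3 ≤ N) {ω ω' : ℕ → ℕ} (hω : ∀ n, ω n < numLetters N)
    (hω' : ∀ n, ω' n < numLetters N) {n : ℕ} (h : ∀ k < n, ω k = ω' k) :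
    |massPoint N ω - massPoint N ω'| ≤ cylMass N ω n := by
  have h1 := massLeft_le_massPoint hN hω n
  have h2 := massPoint_le_massLeft_add_cylMass hN hω n
  have h3 := massLeft_le_massPoint hN hω' n
  have h4 := massPoint_le_massLeft_add_cylMass hN hω' n
  rw [← massLeft_congr h] at h3
  rw [← massLeft_congr h, ← cylMass_congr h] at h4
  rw [abs_le]
  constructor <;> linarith

theorem cylMass_mul_pow_le (hN : 7 ≤ N) (ω : ℕ → ℕ) (n : ℕ) :
    cylMass N ω n * (1 - 6 / ((N : ℝ) - 1)) ^ n ≤ cylLength (prefixMatrix N ω n) := by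
  have hN' : (7 : ℝ) ≤ N := by exact_mod_cast hN
  have hρ : 0 ≤ 1 - 6 / ((N : ℝ) - 1) := by
    rw [sub_nonneg, div_le_one (by linarith)]; linarith
  induction n with
  | zero => simp [cylMass, prefixMatrix, cylLength]
  | succ n ih =>
    have hA := isCylinderMatrix_prefixMatrix N ω n
    have hLs := hA.childLengthSum_pos (by omega : 3 ≤ N)
    have hlen := hA.cylLength_pos
    have hlen' := (hA.mul_letter N (ω n)).cylLength_pos
    have hstep : (1 - 6 / ((N : ℝ) - 1)) * childWeight N (prefixMatrix N ω n) (ω n)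
        ≤ cylLength (prefixMatrix N ω (n + 1)) / cylLength (prefixMatrix N ω n) := by
      rw [childWeight, mul_div_assoc', div_le_div_iff₀ hLs hlen, mul_comm _ (childLengthSum _ _),
        mul_right_comm]
      exact mul_le_mul_of_nonneg_right (hA.one_sub_mul_cylLength_le_sum (by omega)) hlen'.le
    calc cylMass N ω (n + 1) * (1 - 6 / ((N : ℝ) - 1)) ^ (n + 1)
        = cylMass N ω n * (1 - 6 / ((N : ℝ) - 1)) ^ n
          * ((1 - 6 / ((N : ℝ) - 1)) * childWeight N (prefixMatrix N ω n) (ω n)) := by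
          rw [cylMass, pow_succ]; ring
      _ ≤ cylLength (prefixMatrix N ω n)
          * (cylLength (prefixMatrix N ω (n + 1)) / cylLength (prefixMatrix N ω n)) :=
          mul_le_mul ih hstep (mul_nonneg hρ (hA.childWeight_nonneg _)) hlen.le
      _ = cylLength (prefixMatrix N ω (n + 1)) := by field_simp

theorem cylMass_le_cylLength_rpow (hN : 7 ≤ N) {s : ℝ} (hs : s ≤ 1)
    (hsN : (1 / 4 : ℝ) ^ (1 - s) ≤ 1 - 6 / ((N : ℝ) - 1)) (ω : ℕ → ℕ) (n : ℕ) :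
    cylMass N ω n ≤ cylLength (prefixMatrix N ω n) ^ s := by
  set ρ := 1 - 6 / ((N : ℝ) - 1)
  set ℓ := cylLength (prefixMatrix N ω n)
  have hℓ : 0 < ℓ := (isCylinderMatrix_prefixMatrix N ω n).cylLength_pos
  have hρn : 0 < ρ ^ n := pow_pos ((Real.rpow_pos_of_pos (by norm_num) _).trans_le hsN) n
  have hℓρ : ℓ ^ (1 - s) ≤ ρ ^ n :=
    calc ℓ ^ (1 - s) ≤ ((1 / 4 : ℝ) ^ n) ^ (1 - s) :=
          Real.rpow_le_rpow hℓ.le (cylLength_prefixMatrix_le ω n) (by linarith)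
      _ = ((1 / 4 : ℝ) ^ (1 - s)) ^ n := by
          rw [← Real.rpow_natCast, ← Real.rpow_mul (by norm_num), mul_comm, Real.rpow_mul
            (by norm_num), Real.rpow_natCast]
      _ ≤ ρ ^ n := pow_le_pow_left₀ (by positivity) hsN n
  have := cylMass_mul_pow_le hN ω n
  rw [← le_div_iff₀ hρn] at this
  refine this.trans ?_
  rw [div_le_iff₀ hρn]
  calc ℓ = ℓ ^ (1 - s) * ℓ ^ s := by rw [← Real.rpow_add hℓ]; norm_num
    _ ≤ ρ ^ n * ℓ ^ s := by gcongr
    _ = ℓ ^ s * ρ ^ n := mul_comm _ _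

end MassEstimates

section Holder

variable {N : ℕ} {s : ℝ}

theorem abs_massPoint_sub_le_of_lt (hN : 7 ≤ N) (hs0 : 0 ≤ s) (hs1 : s ≤ 1)
    (hsN : (1 / 4 : ℝ) ^ (1 - s) ≤ 1 - 6 / ((N : ℝ) - 1)) {ω ω' : ℕ → ℕ}
    (hω : ∀ n, ω n < numLetters N) (hω' : ∀ n, ω' n < numLetters N) {n : ℕ}
    (hpre : ∀ k < n, ω k = ω' k) (hlt : ω n < ω' n) :
    |massPoint N ω - massPoint N ω'| ≤ (8 * (N : ℝ) ^ 5) ^ s * |codePoint N ω - codePoint N ω'| ^ s := by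
  have hN' : (0 : ℝ) < N := by exact_mod_cast (by omega : 0 < N)
  have hlen := (isCylinderMatrix_prefixMatrix N ω n).cylLength_pos
  have hK : (0 : ℝ) < 8 * (N : ℝ) ^ 5 := by positivity
  have hgap := cylLength_div_le_codePoint_sub (by omega) hpre hlt (hω' n)
  have hd := (div_pos hlen hK).trans_le hgap
  rw [div_le_iff₀ hK] at hgap
  calc |massPoint N ω - massPoint N ω'| ≤ cylMass N ω n :=
        abs_massPoint_sub_le_cylMass (by omega) hω hω' hpre
    _ ≤ cylLength (prefixMatrix N ω n) ^ s := cylMass_le_cylLength_rpow hN hs1 hsN ω n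
    _ ≤ (8 * (N : ℝ) ^ 5 * |codePoint N ω - codePoint N ω'|) ^ s := by
        gcongr
        rw [abs_sub_comm, abs_of_pos hd]
        linarith
    _ = (8 * (N : ℝ) ^ 5) ^ s * |codePoint N ω - codePoint N ω'| ^ s :=
        Real.mul_rpow (by positivity) (abs_nonneg _)

theorem abs_massPoint_sub_le (hN : 7 ≤ N) (hs0 : 0 ≤ s) (hs1 : s ≤ 1)
    (hsN : (1 / 4 : ℝ) ^ (1 - s) ≤ 1 - 6 / ((N : ℝ) - 1)) {ω ω' : ℕ → ℕ}
    (hω : ∀ n, ω n < numLetters N) (hω' : ∀ n, ω' n < numLetters N) :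
    |massPoint N ω - massPoint N ω'| ≤ (8 * (N : ℝ) ^ 5) ^ s * |codePoint N ω - codePoint N ω'| ^ s := by
  classical
  by_cases hne : ∃ n, ω n ≠ ω' n
  · have hpre : ∀ k < Nat.find hne, ω k = ω' k := fun k hk => not_not.1 (Nat.find_min hne hk)
    rcases (Nat.find_spec hne).lt_or_gt with hlt | hlt
    · exact abs_massPoint_sub_le_of_lt hN hs0 hs1 hsN hω hω' hpre hlt
    · rw [abs_sub_comm, abs_sub_comm (codePoint N ω)]
      exact abs_massPoint_sub_le_of_lt hN hs0 hs1 hsN hω' hω (fun k hk => (hpre k hk).symm) hlt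
  · obtain rfl : ω = ω' := funext fun n => not_not.1 (not_exists.1 hne n)
    simp only [sub_self, abs_zero]
    positivity

end Holder

section Greedy

open Finset

variable (N : ℕ)

/-- The cut points of the mass of the `n`-cylinder of `ω` among its children. -/
noncomputable def childCut (ω : ℕ → ℕ) (n j : ℕ) : ℝ :=
  massLeft N ω n + cylMass N ω n * ∑ i ∈ range j, childWeight N (prefixMatrix N ω n) i

/-- The `n`-th letter is the child of the current cylinder whose share of the mass contains `t`.
Only the letters before `n` are read by `childCut`, so padding the prefix with `0` is harmless. -/
noncomputable def greedyWord (t : ℝ) (n : ℕ) : ℕ :=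
  sInf {j | t < childCut N (fun k => if k < n then greedyWord t k else 0) n (j + 1)}

variable {N}

theorem childCut_congr {ω ω' : ℕ → ℕ} {n : ℕ} (h : ∀ k < n, ω k = ω' k) :
    childCut N ω n = childCut N ω' n := by
  ext j
  rw [childCut, childCut, massLeft_congr h, cylMass_congr h, prefixMatrix_congr h]

theorem greedyWord_eq (t : ℝ) (n : ℕ) :
    greedyWord N t n = sInf {j | t < childCut N (greedyWord N t) n (j + 1)} := by
  rw [greedyWord, childCut_congr fun k hk => if_pos hk]

theorem greedyWord_succ_mem (hN : 3 ≤ N) {t : ℝ} {n : ℕ} (h0 : massLeft N (greedyWord N t) n ≤ t)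
    (h1 : t < massLeft N (greedyWord N t) n + cylMass N (greedyWord N t) n) :
    greedyWord N t n < numLetters N ∧ massLeft N (greedyWord N t) (n + 1) ≤ t ∧
      t < massLeft N (greedyWord N t) (n + 1) + cylMass N (greedyWord N t) (n + 1) := by
  have hA := isCylinderMatrix_prefixMatrix N (greedyWord N t) n
  have hcut := Nat.sInf_crossing_spec (f := childCut N (greedyWord N t) n) (M := numLetters N)
    (by simpa [childCut] using h0) (by rwa [childCut, hA.sum_childWeight hN, mul_one])
  rw [← greedyWord_eq] at hcut
  rwa [massLeft_add_cylMass_succ]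

theorem greedyWord_mem (hN : 3 ≤ N) {t : ℝ} (ht0 : 0 ≤ t) (ht1 : t < 1) (n : ℕ) :
    massLeft N (greedyWord N t) n ≤ t ∧
      t < massLeft N (greedyWord N t) n + cylMass N (greedyWord N t) n := by
  induction n with
  | zero => simpa [massLeft, cylMass] using ⟨ht0, ht1⟩
  | succ n ih => exact (greedyWord_succ_mem hN ih.1 ih.2).2

theorem greedyWord_lt (hN : 3 ≤ N) {t : ℝ} (ht0 : 0 ≤ t) (ht1 : t < 1) (n : ℕ) :
    greedyWord N t n < numLetters N :=
  (greedyWord_succ_mem hN (greedyWord_mem hN ht0 ht1 n).1 (greedyWord_mem hN ht0 ht1 n).2).1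

theorem tendsto_cylMass (hN : 10 ≤ N) (ω : ℕ → ℕ) :
    Filter.Tendsto (cylMass N ω) Filter.atTop (nhds 0) := by
  have hN' : (10 : ℝ) ≤ N := by exact_mod_cast hN
  set ρ := 1 - 6 / ((N : ℝ) - 1)
  have hρ : 1 / 4 < ρ := by
    have : 6 / ((N : ℝ) - 1) < 3 / 4 := by rw [div_lt_iff₀ (by linarith)]; linarith
    simp only [ρ]; linarith
  have hbound : ∀ n, cylMass N ω n ≤ (1 / 4 / ρ) ^ n := fun n => by
    rw [div_pow, le_div_iff₀ (pow_pos (by linarith) n)]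
    exact (cylMass_mul_pow_le (by omega) ω n).trans (cylLength_prefixMatrix_le ω n)
  exact squeeze_zero (cylMass_nonneg ω) hbound (tendsto_pow_atTop_nhds_zero_of_lt_one
    (by positivity) ((div_lt_one (by linarith)).2 hρ))

theorem massPoint_greedyWord (hN : 10 ≤ N) {t : ℝ} (ht0 : 0 ≤ t) (ht1 : t < 1) :
    massPoint N (greedyWord N t) = t := by
  have hω := greedyWord_lt (N := N) (by omega) ht0 ht1
  have hdist : ∀ n, |massPoint N (greedyWord N t) - t| ≤ cylMass N (greedyWord N t) n := fun n => by
    have := greedyWord_mem (N := N) (by omega) ht0 ht1 n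
    have := massLeft_le_massPoint (by omega) hω n
    have := massPoint_le_massLeft_add_cylMass (by omega) hω n
    rw [abs_le]
    constructor <;> linarith
  have := ge_of_tendsto' (tendsto_cylMass hN _) hdist
  rwa [abs_nonpos_iff, sub_eq_zero] at this

end Greedy

theorem exists_le_one_sub_div {c : ℝ} (hc : c < 1) :
    ∃ N : ℕ, 10 ≤ N ∧ c ≤ 1 - 6 / ((N : ℝ) - 1) := by
  obtain ⟨m, hm⟩ := exists_nat_gt (6 / (1 - c))
  refine ⟨m + 10, by omega, ?_⟩
  have hm' : 6 / (1 - c) ≤ ((m + 10 : ℕ) : ℝ) - 1 := by push_cast; linarith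
  rw [div_le_iff₀ (by linarith)] at hm'
  have hpos : (0 : ℝ) < ((m + 10 : ℕ) : ℝ) - 1 := by push_cast; linarith [(m.cast_nonneg : (0 : ℝ) ≤ m)]
  rw [le_sub_comm, div_le_iff₀ hpos]
  linarith

theorem le_dimH_image_codePoint {N : ℕ} (hN : 10 ≤ N) {s : ℝ≥0} (hs0 : 0 < s) (hs1 : s ≤ 1)
    (hsN : (1 / 4 : ℝ) ^ (1 - (s : ℝ)) ≤ 1 - 6 / ((N : ℝ) - 1)) :
    (s : ℝ≥0∞) ≤ dimH (codePoint N '' {ω | ∀ n, ω n < numLetters N}) := by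
  have hdim := dimH_image_le_div_of_dist_le (g := codePoint N) (F := massPoint N)
    (C := ⟨(8 * (N : ℝ) ^ 5) ^ (s : ℝ), by positivity⟩) hs0 fun ω hω ω' hω' =>
      abs_massPoint_sub_le (by omega) s.coe_nonneg hs1 hsN hω hω'
  have hsurj : Set.Ico (0 : ℝ) 1 ⊆ massPoint N '' {ω | ∀ n, ω n < numLetters N} := fun t ht =>
    ⟨greedyWord N t, greedyWord_lt (by omega) ht.1 ht.2, massPoint_greedyWord hN ht.1 ht.2⟩
  have hIco : dimH (Set.Ico (0 : ℝ) 1) = 1 := by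
    rw [Real.dimH_of_nonempty_interior (by simp), Module.finrank_self, Nat.cast_one]
  have := hIco ▸ (dimH_mono hsurj).trans hdim
  rwa [ENNReal.le_div_iff_mul_le (.inl (by exact_mod_cast hs0.ne')) (.inl ENNReal.coe_ne_top),
    one_mul] at this

theorem image_codePoint_subset {N : ℕ} (hN : 3 ≤ N) :
    codePoint N '' {ω | ∀ n, ω n < numLetters N} ⊆ {x : ℝ | x ∈ Set.Ioo (0 : ℝ) 1 ∧
      Irrational x ∧ ∃ N : ℤ, ∀ j : ℕ, 1 ≤ j → bcf j x ≤ N} := by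
  rintro _ ⟨ω, -, rfl⟩
  exact ⟨⟨codePoint_pos hN ω, codePoint_lt_one hN ω⟩, irrational_codePoint hN ω, N + 1,
    fun j _ => bcf_codePoint_le hN ω j⟩

theorem le_dimH_boundedDigits {s : ℝ≥0} (hs0 : 0 < s) (hs1 : s < 1) :
    (s : ℝ≥0∞) ≤ dimH {x : ℝ | x ∈ Set.Ioo (0 : ℝ) 1 ∧ Irrational x ∧
      ∃ N : ℤ, ∀ j : ℕ, 1 ≤ j → bcf j x ≤ N} := by
  have hs1' : (s : ℝ) < 1 := by exact_mod_cast hs1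
  obtain ⟨N, hN, hsN⟩ := exists_le_one_sub_div
    (Real.rpow_lt_one (by norm_num) (by norm_num) (by linarith) : (1 / 4 : ℝ) ^ (1 - (s : ℝ)) < 1)
  exact (le_dimH_image_codePoint hN hs0 hs1.le hsN).trans (dimH_mono (image_codePoint_subset (by omega)))

end Renyi

/-- The set of irrational numbers in `(0,1)` with bounded backward continued fraction
digits has Hausdorff dimension 1. -/
theorem renyi_bounded_digits_full_dimension :
    dimH {x : ℝ | x ∈ Set.Ioo (0 : ℝ) 1 ∧ Irrational x ∧
      ∃ N : ℤ, ∀ j : ℕ, 1 ≤ j → bcf j x ≤ N} = 1 := by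
  refine le_antisymm ((dimH_mono (Set.subset_univ _)).trans_eq Real.dimH_univ) ?_
  refine ENNReal.le_of_forall_nnreal_lt fun r hr => ?_
  obtain ⟨s, hrs, hs0, hs1⟩ : ∃ s : ℝ≥0, r ≤ s ∧ 0 < s ∧ s < 1 :=
    ⟨max r (1 / 2), le_max_left _ _, lt_max_of_lt_right (by norm_num),
      max_lt (ENNReal.coe_lt_one_iff.1 hr) (by norm_num)⟩
  exact (ENNReal.coe_le_coe.2 hrs).trans (Renyi.le_dimH_boundedDigits hs0 hs1)
end

section
/- Let A ⊆ ℝ be a nonempty compact interval and let f : ℝ → ℝ be a function that is continuous and injective on A, differentiable at every point of A with |f'(x)| ≥ 1 for all x ∈ A, such that the set {x ∈ A : |f'(x)| = 1} is finite and A ⊆ f(A). Define C_0 = A and C_{n+1} = A ∩ f^{−1}(C_n) for n ≥ 0. Then diam(C_n) → 0 as n → ∞. -/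
open Filter Set

/-- **Decay of cylinder diameters** (cf. Lemma 5.2). Let `A` be a nonempty compact
interval, and let `f : ℝ → ℝ` be continuous and injective on `A`, differentiable at
every point of `A` with `|f'| ≥ 1` on `A`, such that `{x ∈ A : |f'(x)| = 1}` is finite
and `A ⊆ f(A)`. If `C_0 = A` and `C_{n+1} = A ∩ f⁻¹(C_n)`, then `diam C_n → 0`. -/
theorem cylinder_diam_tendsto_zero
    (A : Set ℝ) (u v : ℝ) (huv : u ≤ v) (hA : A = Set.Icc u v)
    (f : ℝ → ℝ) (hcont : ContinuousOn f A) (hinj : Set.InjOn f A)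
    (hdiff : ∀ x ∈ A, DifferentiableAt ℝ f x)
    (hd1 : ∀ x ∈ A, 1 ≤ |deriv f x|)
    (hfin : {x ∈ A | |deriv f x| = 1}.Finite)
    (hsub : A ⊆ f '' A)
    (C : ℕ → Set ℝ) (hC0 : C 0 = A) (hCs : ∀ n : ℕ, C (n + 1) = A ∩ f ⁻¹' C n) :
    Tendsto (fun n : ℕ => Metric.diam (C n)) atTop (nhds 0) := by
  have hAc : IsCompact A := hA ▸ isCompact_Icc
  have hAcl : IsClosed A := hA ▸ isClosed_Icc
  have hAoc : A.OrdConnected := hA ▸ ordConnected_Icc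
  have hmonoA : StrictMonoOn f A ∨ StrictAntiOn f A := by
    rw [hA] at hcont hinj ⊢
    exact ContinuousOn.strictMonoOn_of_injOn_Icc' huv hcont hinj
  -- basic structure of the cylinders
  have hCA : ∀ n, C n ⊆ A := by
    intro n
    cases n with
    | zero => rw [hC0]
    | succ n => rw [hCs]; exact inter_subset_left
  have hanti : ∀ n, C (n + 1) ⊆ C n := by
    intro n
    induction n with
    | zero => rw [hCs, hC0]; exact inter_subset_left
    | succ n ih =>
      intro x hx
      rw [hCs] at hx ⊢
      exact ⟨hx.1, ih hx.2⟩
  have hclosed : ∀ n, IsClosed (C n) := by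
    intro n
    induction n with
    | zero => rw [hC0]; exact hAcl
    | succ n ih =>
      rw [hCs]
      exact hcont.preimage_isClosed_of_isClosed hAcl ih
  have hcomp : ∀ n, IsCompact (C n) := fun n =>
    hAc.of_isClosed_subset (hclosed n) (hCA n)
  have hbdd : ∀ n, Bornology.IsBounded (C n) := fun n => (hcomp n).isBounded
  have hoc : ∀ n, (C n).OrdConnected := by
    intro n
    induction n with
    | zero => rw [hC0]; exact hAoc
    | succ n ih =>
      rw [hCs]
      constructor
      intro x hx y hy z hz
      have hzA : z ∈ A := hAoc.out hx.1 hy.1 hz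
      refine ⟨hzA, ?_⟩
      have huIcc : f z ∈ uIcc (f x) (f y) := by
        rcases hmonoA with hm | hm
        · exact Icc_subset_uIcc ⟨hm.monotoneOn hx.1 hzA hz.1, hm.monotoneOn hzA hy.1 hz.2⟩
        · exact Icc_subset_uIcc' ⟨hm.antitoneOn hzA hy.1 hz.2, hm.antitoneOn hx.1 hzA hz.1⟩
      exact ih.uIcc_subset hx.2 hy.2 huIcc
  -- diameters decrease, converge to infimum L
  have hdanti : Antitone fun n => Metric.diam (C n) :=
    antitone_nat_of_succ_le fun n => Metric.diam_mono (hanti n) (hbdd n)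
  have hbddb : BddBelow (Set.range fun n => Metric.diam (C n)) :=
    ⟨0, by rintro _ ⟨n, rfl⟩; exact Metric.diam_nonneg⟩
  set L := ⨅ n, Metric.diam (C n) with hLdef
  have htend : Tendsto (fun n : ℕ => Metric.diam (C n)) atTop (nhds L) :=
    tendsto_atTop_ciInf hdanti hbddb
  suffices hL0 : L = 0 by rwa [hL0] at htend
  by_contra hL
  have hLpos : 0 < L :=
    lt_of_le_of_ne (le_ciInf fun n => Metric.diam_nonneg) (Ne.symm hL)
  have hLle : ∀ n, L ≤ Metric.diam (C n) := fun n => ciInf_le hbddb n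
  have hCne : ∀ n, (C n).Nonempty := by
    intro n
    by_contra h
    rw [Set.not_nonempty_iff_eq_empty] at h
    have := hLle n
    rw [h, Metric.diam_empty] at this
    linarith
  -- endpoints
  set a : ℕ → ℝ := fun n => sInf (C n) with hadef
  set b : ℕ → ℝ := fun n => sSup (C n) with hbdef
  have haC : ∀ n, a n ∈ C n := fun n => (hcomp n).sInf_mem (hCne n)
  have hbC : ∀ n, b n ∈ C n := fun n => (hcomp n).sSup_mem (hCne n)
  have hCeq : ∀ n, C n = Icc (a n) (b n) := by
    intro n
    refine Subset.antisymm (fun x hx => ⟨csInf_le (hbdd n).bddBelow hx, le_csSup (hbdd n).bddAbove hx⟩) ?_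
    exact (hoc n).out (haC n) (hbC n)
  have hab : ∀ n, a n ≤ b n := fun n => ((hCeq n ▸ haC n : a n ∈ Icc (a n) (b n))).2
  have hdiam : ∀ n, Metric.diam (C n) = b n - a n := by
    intro n
    rw [hCeq n, Real.diam_Icc (hab n)]
  have hamono : Monotone a :=
    monotone_nat_of_le_succ fun n => csInf_le_csInf (hbdd n).bddBelow (hCne (n + 1)) (hanti n)
  have hbanti : Antitone b :=
    antitone_nat_of_succ_le fun n => csSup_le_csSup (hbdd n).bddAbove (hCne (n + 1)) (hanti n)
  set α := ⨆ n, a n with hαdef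
  set β := ⨅ n, b n with hβdef
  have hbddab : BddAbove (Set.range a) :=
    ⟨b 0, by rintro _ ⟨n, rfl⟩; exact (hab n).trans (hbanti (Nat.zero_le n))⟩
  have hbddbb : BddBelow (Set.range b) :=
    ⟨a 0, by rintro _ ⟨n, rfl⟩; exact (hamono (Nat.zero_le n)).trans (hab n)⟩
  have hta : Tendsto a atTop (nhds α) := tendsto_atTop_ciSup hamono hbddab
  have htb : Tendsto b atTop (nhds β) := tendsto_atTop_ciInf hbanti hbddbb
  have haα : ∀ n, a n ≤ α := fun n => le_ciSup hbddab n
  have hβb : ∀ n, β ≤ b n := fun n => ciInf_le hbddbb n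
  have hLeq : β - α = L := by
    refine tendsto_nhds_unique (htb.sub hta) (Tendsto.congr (fun n => hdiam n) htend)
  have hαβ : α < β := by linarith
  have hIccC : ∀ n, Icc α β ⊆ C n := fun n =>
    (hCeq n) ▸ Icc_subset_Icc (haα n) (hβb n)
  have hsubA : Icc α β ⊆ A := fun x hx => hC0 ▸ hIccC 0 hx
  -- invariance of the limit interval
  have hinv : ∀ x ∈ Icc α β, f x ∈ Icc α β := by
    intro x hx
    have h1 : ∀ n, f x ∈ C n := fun n => ((hCs n) ▸ hIccC (n + 1) hx).2
    have h2 : ∀ n, f x ∈ Icc (a n) (b n) := fun n => hCeq n ▸ h1 n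
    exact ⟨ciSup_le fun n => (h2 n).1, le_ciInf fun n => (h2 n).2⟩
  -- mean value estimate
  have key : ∀ x y : ℝ, x < y → Icc x y ⊆ A → y - x ≤ |f y - f x| := by
    intro x y hxy hss
    obtain ⟨c, hc, hc'⟩ :=
      exists_deriv_eq_slope f hxy (hcont.mono hss)
        (fun z hz => (hdiff z (hss (Ioo_subset_Icc_self hz))).differentiableWithinAt)
    have h1 : 1 ≤ |deriv f c| := hd1 c (hss (Ioo_subset_Icc_self hc))
    have hyx : (0 : ℝ) < y - x := sub_pos.2 hxy
    rw [hc', abs_div, abs_of_pos hyx, le_div_iff₀ hyx] at h1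
    linarith
  have hfα := hinv α ⟨le_refl α, hαβ.le⟩
  have hfβ := hinv β ⟨hαβ.le, le_refl β⟩
  have hub : |f β - f α| ≤ β - α := by
    rw [abs_sub_le_iff]
    constructor <;> [skip; skip] <;> linarith [hfα.1, hfα.2, hfβ.1, hfβ.2]
  have hlb : β - α ≤ |f β - f α| := key α β hαβ hsubA
  have heq : |f β - f α| = β - α := le_antisymm hub hlb
  have hIccx : ∀ x ∈ Ioo α β, Icc α x ⊆ A := fun x hx =>
    (Icc_subset_Icc le_rfl hx.2.le).trans hsubA
  have hIccx' : ∀ x ∈ Ioo α β, Icc x β ⊆ A := fun x hx =>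
    (Icc_subset_Icc hx.1.le le_rfl).trans hsubA
  rcases (abs_eq (by linarith : (0:ℝ) ≤ β - α)).1 heq with hcase | hcase
  · -- increasing case: f is the identity on [α, β]
    have hfa : f α = α := by linarith [hfα.1, hfβ.2]
    have hfb : f β = β := by linarith [hfα.1, hfβ.2]
    have hid : ∀ x ∈ Ioo α β, f x = x := by
      intro x hx
      have hfx := hinv x ⟨hx.1.le, hx.2.le⟩
      have h1 := key α x hx.1 (hIccx x hx)
      have h2 := key x β hx.2 (hIccx' x hx)
      rw [hfa, abs_of_nonneg (by linarith [hfx.1])] at h1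
      rw [hfb, abs_of_nonneg (by linarith [hfx.2])] at h2
      linarith
    have hss : Ioo α β ⊆ {x ∈ A | |deriv f x| = 1} := by
      intro x hx
      refine ⟨hsubA (Ioo_subset_Icc_self hx), ?_⟩
      have hev : f =ᶠ[nhds x] id := by
        filter_upwards [Ioo_mem_nhds hx.1 hx.2] with y hy using hid y hy
      rw [hev.deriv_eq, deriv_id x, abs_one]
    exact ((Set.Ioo_infinite hαβ).mono hss) hfin
  · -- decreasing case: f is x ↦ α + β - x on [α, β]
    have hfa : f α = β := by linarith [hfα.2, hfβ.1]
    have hfb : f β = α := by linarith [hfα.2, hfβ.1]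
    have hid : ∀ x ∈ Ioo α β, f x = α + β - x := by
      intro x hx
      have hfx := hinv x ⟨hx.1.le, hx.2.le⟩
      have h1 := key α x hx.1 (hIccx x hx)
      have h2 := key x β hx.2 (hIccx' x hx)
      rw [hfa, abs_sub_comm, abs_of_nonneg (by linarith [hfx.2])] at h1
      rw [hfb, abs_sub_comm, abs_of_nonneg (by linarith [hfx.1])] at h2
      linarith
    have hss : Ioo α β ⊆ {x ∈ A | |deriv f x| = 1} := by
      intro x hx
      refine ⟨hsubA (Ioo_subset_Icc_self hx), ?_⟩
      have hev : f =ᶠ[nhds x] fun y => α + β - y := by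
        filter_upwards [Ioo_mem_nhds hx.1 hx.2] with y hy using hid y hy
      have hder : HasDerivAt (fun y : ℝ => α + β - y) (-1) x := by
        simpa using (hasDerivAt_id x).const_sub (α + β)
      rw [hev.deriv_eq, hder.deriv, abs_neg, abs_one]
    exact ((Set.Ioo_infinite hαβ).mono hss) hfin
end

section
/- Let f : Δ → [0,1] be a non-uniformly expanding Markov map. Assume condition (M3): there exists s > 1 such that whenever a₁a₂ is an admissible word of length 2 for which either a₂ is an expanding index or a₁ ≠ a₂, one has inf_{x ∈ Δ_{a₁a₂}} |(f²)'(x)| ≥ s. Then f has uniform decay of cylinders, i.e. sup_{ω∈Eⁿ} |Δ_ω| → 0 as n → ∞. -/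
open Filter MeasureTheory Set

/-- A Markov map of the interval `[0,1]` with countably many branches indexed by `S`:
a family `{Δ_a}` of nonempty connected subsets of `[0,1]` with pairwise disjoint
interiors, a map `f` whose restriction to each `Δ_a` is a C¹ diffeomorphism onto its
image with bounded derivative (the branch derivative is `f' a`), mapping into `[0,1]`,
and satisfying the Markov property: if `f(Δ_a) ∩ Δ_b` has nonempty interior then
`f(Δ_a) ⊇ Δ_b`. -/
structure MarkovMap (S : Type) where
  Δ : S → Set ℝ
  f : ℝ → ℝ
  f' : S → ℝ → ℝ
  nonempty : ∀ a, (Δ a).Nonempty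
  subset_unit : ∀ a, Δ a ⊆ Set.Icc 0 1
  conn : ∀ a, IsPreconnected (Δ a)
  disj_int : Pairwise fun a b => interior (Δ a) ∩ interior (Δ b) = ∅
  maps_unit : ∀ a, Set.MapsTo f (Δ a) (Set.Icc 0 1)
  inj : ∀ a, Set.InjOn f (Δ a)
  hasDeriv : ∀ a, ∀ x ∈ Δ a, HasDerivWithinAt f (f' a x) (Δ a) x
  derivCont : ∀ a, ContinuousOn (f' a) (Δ a)
  derivNe : ∀ a, ∀ x ∈ Δ a, f' a x ≠ 0
  derivBdd : ∀ a, ∃ C : ℝ, ∀ x ∈ Δ a, |f' a x| ≤ C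
  markov : ∀ a b, (interior (f '' Δ a ∩ Δ b)).Nonempty → Δ b ⊆ f '' Δ a

namespace MarkovMap

variable {S : Type} (M : MarkovMap S)

/-- A (nonempty) word is admissible if every transition `ω_j → ω_{j+1}` satisfies
`f(Δ_{ω_j}) ⊇ Δ_{ω_{j+1}}`. -/
def Adm (w : List S) : Prop :=
  w ≠ [] ∧ w.Chain' fun a b => M.Δ b ⊆ M.f '' M.Δ a

/-- The cylinder `Δ_ω = ⋂_{j<n} f^{−j}(Δ_{ω_j})` of a word `ω`. -/
def cyl (w : List S) : Set ℝ :=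
  {x | ∀ j : Fin w.length, M.f^[(j : ℕ)] x ∈ M.Δ (w.get j)}

/-- Uniform decay of cylinders: `sup_{ω ∈ Eⁿ} |Δ_ω| → 0` as `n → ∞`. -/
def UniformDecay : Prop :=
  ∀ ε : ℝ, 0 < ε → ∃ N : ℕ, ∀ w : List S, M.Adm w → N ≤ w.length →
    Metric.diam (M.cyl w) < ε

/-- Finite irreducibility: there is a finite set `Λ` of words, each empty or
admissible, such that any two admissible words can be admissibly joined by some
`λ ∈ Λ`. -/
def FinIrr : Prop :=
  ∃ Λ : Finset (List S), (∀ l ∈ Λ, l = [] ∨ M.Adm l) ∧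
    ∀ w v : List S, M.Adm w → M.Adm v → ∃ l ∈ Λ, M.Adm (w ++ l ++ v)

/-- `f` is non-uniformly expanding: `|f'| > 1` everywhere except at finitely many
pairs `(a, x_a)` with `x_a ∈ Δ_a` and `|f_a'(x_a)| = 1`. -/
def NonUnifExp : Prop :=
  ∃ N : Set (S × ℝ), N.Finite ∧
    (∀ p ∈ N, p.2 ∈ M.Δ p.1 ∧ |M.f' p.1 p.2| = 1) ∧
    ∀ a, ∀ x ∈ M.Δ a, (a, x) ∉ N → 1 < |M.f' a x|

/-- Birkhoff sum `S_n φ = Σ_{j<n} φ ∘ f^j`. -/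
noncomputable def birk (φ : ℝ → ℝ) (n : ℕ) (x : ℝ) : ℝ :=
  ∑ j ∈ Finset.range n, φ (M.f^[j] x)

/-- `φ` belongs to the class `𝓕`: there is a bound `D n` on `S_nφ(x) − S_nφ(y)`
over pairs `x, y` in a common `n`-cylinder (in particular `D_1(φ) < ∞`), with
`D n / n → 0` (i.e. `D_n(φ) = o(n)`). -/
def MemF (φ : ℝ → ℝ) : Prop :=
  ∃ D : ℕ → ℝ,
    (∀ w : List S, M.Adm w → ∀ x ∈ M.cyl w, ∀ y ∈ M.cyl w,
      M.birk φ w.length x - M.birk φ w.length y ≤ D w.length) ∧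
    Tendsto (fun n : ℕ => D n / n) atTop (nhds 0)

/-- The Birkhoff sum of `log |f'|` along a word, using the branch derivatives. -/
noncomputable def logDerivSum (w : List S) (x : ℝ) : ℝ :=
  ∑ j : Fin w.length, Real.log |M.f' (w.get j) (M.f^[(j : ℕ)] x)|

/-- Mild distortion: `log |f'| ∈ 𝓕`. -/
def MildDistortion : Prop :=
  ∃ D : ℕ → ℝ,
    (∀ w : List S, M.Adm w → ∀ x ∈ M.cyl w, ∀ y ∈ M.cyl w,
      M.logDerivSum w x - M.logDerivSum w y ≤ D w.length) ∧
    Tendsto (fun n : ℕ => D n / n) atTop (nhds 0)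

/-- The maximal invariant set `J = ⋂_{n≥0} f^{−n}(Δ)`. -/
def Jset : Set ℝ := {x | ∀ n : ℕ, M.f^[n] x ∈ ⋃ a, M.Δ a}

open Classical in
/-- The function `log |f'|` on `Δ` (via a choice of branch), extended by `0`. -/
noncomputable def logDerivFn (x : ℝ) : ℝ :=
  if h : ∃ a, x ∈ M.Δ a then Real.log |M.f' h.choose x| else 0

end MarkovMap

/-!
Every branch is weakly expanding (`|f'| ≥ 1`), so the distance between the orbits of two points
of a common cylinder never decreases, and it stays `≤ 1`. Cut a long word into `G` blocks of `k`
letters. If every block contains a transition `a₁a₂` to which (M3) applies, each block expands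
distances by `s`, so the cylinder has diameter `≤ s⁻ᴳ`. Otherwise some block is a neutral letter
`a` repeated `k` times. On the branch `a`, `|f'| > 1` off a finite set, so by compactness the
integrals of `|f'| - 1` over windows of length `ε` inside `Δ_a` are bounded below by some `δ > 0`,
and the fundamental theorem of calculus gives `|f u - f v| ≥ |u - v| + δ` whenever `|u - v| ≥ ε`.
Hence the cylinder of `aᵏ`, and with it the original one, has diameter `≤ ε` once `k δ ≥ 1`; there
are finitely many neutral letters, so one `k` serves them all.
-/

theorem Set.OrdConnected.Ioo_subset_of_mem_closure {α : Type*} [TopologicalSpace α]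
    [LinearOrder α] [OrderClosedTopology α] {D : Set α} (hD : D.OrdConnected) {u v : α}
    (hu : u ∈ closure D) (hv : v ∈ closure D) : Ioo u v ⊆ D := by
  intro x ⟨hux, hxv⟩
  obtain ⟨p, hpx, hp⟩ := mem_closure_iff_nhds.1 hu _ (Iio_mem_nhds hux)
  obtain ⟨q, hxq, hq⟩ := mem_closure_iff_nhds.1 hv _ (Ioi_mem_nhds hxv)
  exact hD.out hp hq ⟨le_of_lt hpx, le_of_lt hxq⟩

section DerivOn

variable {D : Set ℝ} {g g' : ℝ → ℝ}

theorem Set.OrdConnected.hasDerivAt_of_mem_Ioo (hD : D.OrdConnected)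
    (hg : ∀ x ∈ D, HasDerivWithinAt g (g' x) D x) {u v x : ℝ} (hu : u ∈ D) (hv : v ∈ D)
    (hx : x ∈ Ioo u v) : HasDerivAt g (g' x) x :=
  have hsub : Ioo u v ⊆ D := Ioo_subset_Icc_self.trans (hD.out hu hv)
  (hg x (hsub hx)).hasDerivAt (mem_of_superset (isOpen_Ioo.mem_nhds hx) hsub)

theorem Set.OrdConnected.mul_dist_le_dist_of_le_abs_deriv (hD : D.OrdConnected)
    (hg : ∀ x ∈ D, HasDerivWithinAt g (g' x) D x) {s : ℝ} (hs : ∀ x ∈ D, s ≤ |g' x|)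
    {x y : ℝ} (hx : x ∈ D) (hy : y ∈ D) : s * dist x y ≤ dist (g x) (g y) := by
  wlog hxy : x < y generalizing x y
  · rcases (not_lt.1 hxy).eq_or_lt with rfl | hyx
    · simp
    · rw [dist_comm x, dist_comm (g x)]; exact this hy hx hyx
  have hcont : ContinuousOn g (Icc x y) := fun t ht =>
    ((hg t (hD.out hx hy ht)).continuousWithinAt).mono (hD.out hx hy)
  obtain ⟨c, hc, hslope⟩ := exists_hasDerivAt_eq_slope g g' hxy hcont
    fun t ht => hD.hasDerivAt_of_mem_Ioo hg hx hy ht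
  have hpos : 0 < dist x y := dist_pos.2 hxy.ne
  have hslope' : |g' c| = dist (g x) (g y) / dist x y := by
    rw [hslope, abs_div, Real.dist_eq, Real.dist_eq, abs_sub_comm, abs_sub_comm x]
  calc s * dist x y ≤ |g' c| * dist x y :=
        mul_le_mul_of_nonneg_right (hs c (hD.out hx hy (Ioo_subset_Icc_self hc))) hpos.le
    _ = dist (g x) (g y) := by rw [hslope', div_mul_cancel₀ _ hpos.ne']

theorem IsPreconnected.pos_or_neg_of_ne_zero (hD : IsPreconnected D) (hg'c : ContinuousOn g' D)
    (hne : ∀ x ∈ D, g' x ≠ 0) : (∀ x ∈ D, 0 < g' x) ∨ ∀ x ∈ D, g' x < 0 := by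
  by_contra! h
  obtain ⟨⟨x, hx, hx0⟩, ⟨y, hy, hy0⟩⟩ := h
  obtain ⟨z, hz, hz0⟩ := (hD.image g' hg'c).ordConnected.out (mem_image_of_mem g' hx)
    (mem_image_of_mem g' hy) ⟨hx0, hy0⟩
  exact hne z hz hz0

theorem IsPreconnected.integral_abs_deriv_le_dist (hD : IsPreconnected D)
    (hg : ∀ x ∈ D, HasDerivWithinAt g (g' x) D x) (hg'c : ContinuousOn g' D)
    (hne : ∀ x ∈ D, g' x ≠ 0) {u v : ℝ} (hu : u ∈ D) (hv : v ∈ D) (huv : u ≤ v) :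
    ∫ t in u..v, |g' t| ≤ dist (g u) (g v) := by
  have hsub : uIcc u v ⊆ D := hD.ordConnected.uIcc_subset hu hv
  rw [uIcc_of_le huv] at hsub
  have hftc : ∫ t in u..v, g' t = g v - g u :=
    intervalIntegral.integral_eq_sub_of_hasDeriv_right_of_le huv
      (fun t ht => ((hg t (hsub ht)).continuousWithinAt).mono hsub)
      (fun t ht => (hD.ordConnected.hasDerivAt_of_mem_Ioo hg hu hv ht).hasDerivWithinAt)
      ((hg'c.mono hsub).intervalIntegrable_of_Icc huv)
  rw [Real.dist_eq, abs_sub_comm, ← hftc]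
  rcases hD.pos_or_neg_of_ne_zero hg'c hne with hpos | hneg
  · rw [intervalIntegral.integral_congr fun t ht =>
      abs_of_pos (hpos t (hsub (by rwa [uIcc_of_le huv] at ht)))]
    exact le_abs_self _
  · rw [intervalIntegral.integral_congr fun t ht =>
      abs_of_neg (hneg t (hsub (by rwa [uIcc_of_le huv] at ht))), intervalIntegral.integral_neg]
    exact neg_le_abs _

theorem Set.OrdConnected.exists_pos_le_integral (hD : D.OrdConnected) (hDb : Bornology.IsBounded D)
    {φ : ℝ → ℝ} (hφ0 : 0 ≤ φ) (hφi : Integrable φ) (hφD : ∀ᵐ t, t ∈ D → φ t ≠ 0)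
    {ε : ℝ} (hε : 0 < ε) : ∃ δ > 0, ∀ u ∈ D, ∀ v ∈ D, u + ε ≤ v → δ ≤ ∫ t in u..v, φ t := by
  have hwindow : Continuous fun u => ∫ t in u..u + ε, φ t := by
    have hprim := intervalIntegral.continuous_primitive (fun _ _ => hφi.intervalIntegrable) 0
    refine ((hprim.comp (continuous_add_const ε)).sub hprim).congr fun u => ?_
    exact intervalIntegral.integral_interval_sub_left hφi.intervalIntegrable hφi.intervalIntegrable
  set A := closure D ∩ (· + ε) ⁻¹' closure D
  have hAc : IsCompact A := hDb.isCompact_closure.of_isClosed_subset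
    (isClosed_closure.inter (isClosed_closure.preimage (continuous_add_const ε))) inter_subset_left
  have hwindow_pos : ∀ u ∈ A, 0 < ∫ t in u..u + ε, φ t := by
    intro u ⟨hu, huε⟩
    have hsupp : Ioo u (u + ε) ≤ᵐ[volume] (Function.support φ ∩ Ioc u (u + ε) : Set ℝ) := by
      filter_upwards [hφD] with t ht htI
      exact ⟨ht (hD.Ioo_subset_of_mem_closure hu huε htI), Ioo_subset_Ioc_self htI⟩
    rw [intervalIntegral.integral_pos_iff_support_of_nonneg_ae (.of_forall hφ0)
      hφi.intervalIntegrable]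
    refine ⟨by linarith, lt_of_lt_of_le ?_ (measure_mono_ae hsupp)⟩
    simpa using hε
  obtain ⟨δ, hδ, hδA⟩ := hAc.exists_forall_le' hwindow.continuousOn hwindow_pos
  refine ⟨δ, hδ, fun u hu v hv huv => ?_⟩
  have huA : u ∈ A := ⟨subset_closure hu,
    subset_closure (hD.out hu hv ⟨by linarith, huv⟩)⟩
  exact (hδA u huA).trans (intervalIntegral.integral_mono_interval le_rfl (by linarith) huv
    (.of_forall hφ0) hφi.intervalIntegrable)

theorem integrable_indicator_abs_sub_one (hD : IsPreconnected D) (hDb : Bornology.IsBounded D)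
    (hg'c : ContinuousOn g' D) (hg'b : ∃ C, ∀ x ∈ D, |g' x| ≤ C) :
    Integrable (D.indicator fun t => |g' t| - 1) := by
  obtain ⟨C, hC⟩ := hg'b
  have hmeas : MeasurableSet D := hD.ordConnected.measurableSet
  refine IntegrableOn.integrable_indicator ⟨(hg'c.abs.sub continuousOn_const).aestronglyMeasurable
    hmeas, .restrict_of_bounded (C := C + 1) hDb.measure_lt_top ?_⟩ hmeas
  filter_upwards [ae_restrict_mem hmeas] with t ht
  rw [Real.norm_eq_abs]
  exact (abs_sub _ _).trans (by simpa using hC t ht)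

theorem IsPreconnected.exists_pos_add_le_dist (hD : IsPreconnected D)
    (hDb : Bornology.IsBounded D) (hg : ∀ x ∈ D, HasDerivWithinAt g (g' x) D x)
    (hg'c : ContinuousOn g' D) (hg'b : ∃ C, ∀ x ∈ D, |g' x| ≤ C)
    (h1 : ∀ x ∈ D, 1 ≤ |g' x|) (hae : ∀ᵐ x, x ∈ D → 1 < |g' x|) {ε : ℝ} (hε : 0 < ε) :
    ∃ δ > 0, ∀ u ∈ D, ∀ v ∈ D, ε ≤ dist u v → dist u v + δ ≤ dist (g u) (g v) := by
  set φ := D.indicator fun t => |g' t| - 1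
  have hφD : ∀ᵐ t, t ∈ D → φ t ≠ 0 := by
    filter_upwards [hae] with t ht htD
    simpa [φ, indicator_of_mem htD, sub_eq_zero] using (ht htD).ne'
  obtain ⟨δ, hδ, hδD⟩ := hD.ordConnected.exists_pos_le_integral hDb
    (indicator_nonneg fun t ht => sub_nonneg.2 (h1 t ht))
    (integrable_indicator_abs_sub_one hD hDb hg'c hg'b) hφD hε
  refine ⟨δ, hδ, fun u hu v hv huv => ?_⟩
  wlog hle : u ≤ v generalizing u v
  · rw [dist_comm u, dist_comm (g u)] at *
    exact this v hv u hu huv (le_of_not_ge hle)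
  rw [Real.dist_eq, abs_sub_comm, abs_of_nonneg (sub_nonneg.2 hle)] at huv ⊢
  have hsub : Icc u v ⊆ D := hD.ordConnected.out hu hv
  have hsplit : ∫ t in u..v, |g' t| = (v - u) + ∫ t in u..v, φ t := by
    rw [intervalIntegral.integral_congr fun t ht =>
        indicator_of_mem (hsub (by rwa [uIcc_of_le hle] at ht)) fun t => |g' t| - 1,
      intervalIntegral.integral_sub ((hg'c.mono hsub).abs.intervalIntegrable_of_Icc hle)
        intervalIntegrable_const]
    simp
  calc (v - u) + δ ≤ (v - u) + ∫ t in u..v, φ t := by gcongr; exact hδD u hu v hv (by linarith)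
    _ ≤ dist (g u) (g v) := hsplit ▸ hD.integral_abs_deriv_le_dist hg hg'c
        (fun x hx => abs_pos.1 (one_pos.trans_le (h1 x hx))) hu hv hle

end DerivOn

theorem List.exists_eq_replicate_of_isChain {α : Type*} {P : α → Prop} {l : List α}
    (hl : l.IsChain fun a b => P b ∧ a = b) (h2 : 2 ≤ l.length) :
    ∃ a, P a ∧ l = replicate l.length a := by
  obtain _ | ⟨a, _ | ⟨b, t⟩⟩ := l
  · simp at h2
  · simp at h2
  · obtain ⟨⟨hb, rfl⟩, -⟩ := List.isChain_cons_cons.1 hl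
    refine ⟨a, hb, ?_⟩
    have := List.isChain_cons_eq_iff_eq_replicate.1 (hl.imp fun _ _ h => h.2)
    rw [length_cons, replicate_succ, ← this]

namespace MarkovMap

variable {S : Type} (M : MarkovMap S)

theorem ordConnected_Δ (a : S) : (M.Δ a).OrdConnected := (M.conn a).ordConnected

theorem continuousOn_f (a : S) : ContinuousOn M.f (M.Δ a) :=
  fun x hx => (M.hasDeriv a x hx).continuousWithinAt

variable {M}

theorem mapsTo_uIcc {a : S} {x y : ℝ} (hx : x ∈ M.Δ a) (hy : y ∈ M.Δ a) :
    MapsTo M.f (uIcc x y) (uIcc (M.f x) (M.f y)) := by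
  have hsub : uIcc x y ⊆ M.Δ a := (M.ordConnected_Δ a).uIcc_subset hx hy
  rcases ContinuousOn.strictMonoOn_of_injOn_Icc' inf_le_sup ((M.continuousOn_f a).mono hsub)
    ((M.inj a).mono hsub) with h | h
  exacts [h.monotoneOn.mapsTo_uIcc, h.antitoneOn.mapsTo_uIcc]

@[simp]
theorem cyl_nil : M.cyl [] = univ := by
  ext x; simp [cyl]

theorem cyl_cons (a : S) (w : List S) : M.cyl (a :: w) = M.Δ a ∩ M.f ⁻¹' M.cyl w := by
  ext x
  simp [cyl, Fin.forall_fin_succ]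

theorem cyl_append (u v : List S) :
    M.cyl (u ++ v) = M.cyl u ∩ M.f^[u.length] ⁻¹' M.cyl v := by
  induction u with
  | nil => simp
  | cons a u ih => simp [cyl_cons, ih, inter_assoc, Function.iterate_succ, preimage_comp]

theorem mem_cyl_pair {a₁ a₂ : S} {x : ℝ} :
    x ∈ M.cyl [a₁, a₂] ↔ x ∈ M.Δ a₁ ∧ M.f x ∈ M.Δ a₂ := by
  simp [cyl_cons]

variable (M) in
theorem ordConnected_cyl (w : List S) : (M.cyl w).OrdConnected := by
  induction w with
  | nil => simpa using ordConnected_univ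
  | cons a w ih =>
    rw [cyl_cons]
    refine ⟨fun x hx y hy z hz => ⟨(M.ordConnected_Δ a).out hx.1 hy.1 hz, ?_⟩⟩
    exact ih.uIcc_subset hx.2 hy.2 (mapsTo_uIcc hx.1 hy.1 (Icc_subset_uIcc hz))

theorem iterate_mem_Icc {w : List S} (hw : w ≠ []) {x : ℝ} (hx : x ∈ M.cyl w) {j : ℕ}
    (hj : j ≤ w.length) : M.f^[j] x ∈ Icc 0 1 := by
  induction w generalizing x j with
  | nil => contradiction
  | cons a w ih =>
    rw [cyl_cons] at hx
    cases j with
    | zero => exact M.subset_unit a hx.1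
    | succ j =>
      rcases eq_or_ne w [] with rfl | hw'
      · obtain rfl : j = 0 := by simpa using hj
        exact M.maps_unit a hx.1
      · exact ih hw' hx.2 (by simpa using hj)

theorem mul_dist_le_dist_f_f {a₁ a₂ : S} {s : ℝ}
    (hs : ∀ x ∈ M.cyl [a₁, a₂], s ≤ |M.f' a₂ (M.f x) * M.f' a₁ x|) {x y : ℝ}
    (hx : x ∈ M.cyl [a₁, a₂]) (hy : y ∈ M.cyl [a₁, a₂]) :
    s * dist x y ≤ dist (M.f (M.f x)) (M.f (M.f y)) := by
  refine (M.ordConnected_cyl _).mul_dist_le_dist_of_le_abs_deriv (g := M.f ∘ M.f)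
    (fun z hz => ?_) hs hx hy
  have hsub : M.cyl [a₁, a₂] ⊆ M.Δ a₁ := fun z hz => (mem_cyl_pair.1 hz).1
  exact (M.hasDeriv a₂ _ (mem_cyl_pair.1 hz).2).comp z ((M.hasDeriv a₁ z (hsub hz)).mono hsub)
    fun z hz => (mem_cyl_pair.1 hz).2

section Expanding

variable (h1 : ∀ a, ∀ x ∈ M.Δ a, 1 ≤ |M.f' a x|)
include h1

theorem dist_le_dist_iterate {w : List S} {x y : ℝ} (hx : x ∈ M.cyl w) (hy : y ∈ M.cyl w)
    {j : ℕ} (hj : j ≤ w.length) : dist x y ≤ dist (M.f^[j] x) (M.f^[j] y) := by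
  induction w generalizing x y j with
  | nil =>
    obtain rfl : j = 0 := by simpa using hj
    rfl
  | cons a w ih =>
    rw [cyl_cons] at hx hy
    cases j with
    | zero => rfl
    | succ j =>
      calc dist x y ≤ dist (M.f x) (M.f y) := by
            simpa using (M.ordConnected_Δ a).mul_dist_le_dist_of_le_abs_deriv (M.hasDeriv a)
              (h1 a) hx.1 hy.1
        _ ≤ _ := ih hx.2 hy.2 (by simpa using hj)

theorem dist_le_of_isInfix {v w : List S} (hvw : v <:+: w) {x y : ℝ} (hx : x ∈ M.cyl w)
    (hy : y ∈ M.cyl w) {r : ℝ} (hv : ∀ x ∈ M.cyl v, ∀ y ∈ M.cyl v, dist x y ≤ r) :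
    dist x y ≤ r := by
  obtain ⟨u, t, rfl⟩ := hvw
  rw [cyl_append, cyl_append] at hx hy
  exact (dist_le_dist_iterate h1 hx.1.1 hy.1.1 le_rfl).trans (hv _ hx.1.2 _ hy.1.2)

section Windows

variable {good : S → S → Prop} {s : ℝ} (hs : 0 ≤ s)
  (hgood : ∀ a₁ a₂, M.Δ a₂ ⊆ M.f '' M.Δ a₁ → good a₁ a₂ →
    ∀ x ∈ M.cyl [a₁, a₂], s ≤ |M.f' a₂ (M.f x) * M.f' a₁ x|)
include hs hgood

theorem mul_dist_le_dist_iterate_of_not_isChain {w : List S}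
    (hw : w.IsChain fun a b => M.Δ b ⊆ M.f '' M.Δ a) (hgw : ¬w.IsChain fun a b => ¬good a b)
    {x y : ℝ} (hx : x ∈ M.cyl w) (hy : y ∈ M.cyl w) :
    s * dist x y ≤ dist (M.f^[w.length] x) (M.f^[w.length] y) := by
  obtain ⟨a₁, a₂, u, t, rfl, hg⟩ : ∃ a₁ a₂ u t, w = u ++ a₁ :: a₂ :: t ∧ good a₁ a₂ := by
    simpa [List.isChain_iff_forall_rel_of_append_cons_cons] using hgw
  have htrans := List.isChain_iff_forall_rel_of_append_cons_cons.1 hw rfl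
  rw [cyl_append, show a₁ :: a₂ :: t = [a₁, a₂] ++ t from rfl, cyl_append] at hx hy
  calc s * dist x y ≤ s * dist (M.f^[u.length] x) (M.f^[u.length] y) :=
        mul_le_mul_of_nonneg_left (dist_le_dist_iterate h1 hx.1 hy.1 le_rfl) hs
    _ ≤ dist (M.f^[2] (M.f^[u.length] x)) (M.f^[2] (M.f^[u.length] y)) :=
        mul_dist_le_dist_f_f (hgood _ _ htrans hg) hx.2.1 hy.2.1
    _ ≤ _ := dist_le_dist_iterate h1 hx.2.2 hy.2.2 le_rfl
    _ = _ := by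
      simp only [← Function.iterate_add_apply, List.length_append, List.length_cons,
        List.length_nil]
      ring_nf

theorem pow_mul_dist_le_dist_iterate {k : ℕ} {w : List S}
    (hw : w.IsChain fun a b => M.Δ b ⊆ M.f '' M.Δ a)
    (hwin : ∀ v, v <:+: w → v.length = k → ¬v.IsChain fun a b => ¬good a b)
    {G : ℕ} (hG : G * k ≤ w.length) {x y : ℝ} (hx : x ∈ M.cyl w) (hy : y ∈ M.cyl w) :
    s ^ G * dist x y ≤ dist (M.f^[G * k] x) (M.f^[G * k] y) := by
  induction G generalizing w x y with
  | zero => simp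
  | succ G ih =>
    rw [← List.take_append_drop k w, cyl_append] at hx hy
    have hk : (w.take k).length = k := List.length_take_of_le (by nlinarith)
    have hstep := mul_dist_le_dist_iterate_of_not_isChain h1 hs hgood
      (hw.infix (List.take_prefix k w).isInfix)
      (hwin _ (List.take_prefix k w).isInfix hk) hx.1 hy.1
    have hrest := ih (hw.infix (List.drop_suffix k w).isInfix)
      (fun v hv => hwin v (hv.trans (List.drop_suffix k w).isInfix))
      (by rw [Nat.succ_mul] at hG; rw [List.length_drop]; omega) hx.2 hy.2
    rw [hk] at hstep hrest
    calc s ^ (G + 1) * dist x y = s ^ G * (s * dist x y) := by ring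
      _ ≤ s ^ G * dist (M.f^[k] x) (M.f^[k] y) :=
        mul_le_mul_of_nonneg_left hstep (pow_nonneg hs G)
      _ ≤ _ := hrest
      _ = _ := by simp only [← Function.iterate_add_apply, add_mul, one_mul]

end Windows

end Expanding

theorem add_mul_le_dist_iterate_of_mem_cyl_replicate {a : S} {ε δ : ℝ} (hδ : 0 ≤ δ)
    (hgap : ∀ u ∈ M.Δ a, ∀ v ∈ M.Δ a, ε ≤ dist u v → dist u v + δ ≤ dist (M.f u) (M.f v))
    (k : ℕ) {x y : ℝ} (hx : x ∈ M.cyl (List.replicate k a)) (hy : y ∈ M.cyl (List.replicate k a))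
    (hxy : ε ≤ dist x y) : dist x y + k * δ ≤ dist (M.f^[k] x) (M.f^[k] y) := by
  induction k generalizing x y with
  | zero => simp
  | succ k ih =>
    rw [List.replicate_succ, cyl_cons] at hx hy
    have hfirst := hgap x hx.1 y hy.1 hxy
    have := ih hx.2 hy.2 (by linarith)
    rw [Function.iterate_succ_apply, Function.iterate_succ_apply]
    push_cast
    linarith

theorem eventually_dist_le_of_mem_cyl_replicate {a : S} (h1 : ∀ x ∈ M.Δ a, 1 ≤ |M.f' a x|)
    (hae : ∀ᵐ x, x ∈ M.Δ a → 1 < |M.f' a x|) {ε : ℝ} (hε : 0 < ε) :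
    ∀ᶠ k in atTop, ∀ x ∈ M.cyl (List.replicate k a), ∀ y ∈ M.cyl (List.replicate k a),
      dist x y ≤ ε := by
  obtain ⟨δ, hδ, hgap⟩ := (M.conn a).exists_pos_add_le_dist
    ((Metric.isBounded_Icc 0 1).subset (M.subset_unit a)) (M.hasDeriv a) (M.derivCont a)
    (M.derivBdd a) h1 hae hε
  filter_upwards [eventually_ge_atTop 1, eventually_ge_atTop ⌈1 / δ⌉₊] with k hk1 hkδ x hx y hy
  by_contra! hxy
  have hlong := add_mul_le_dist_iterate_of_mem_cyl_replicate hδ.le hgap k hx hy hxy.le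
  have hne : List.replicate k a ≠ [] := by simp; omega
  have hunit := Real.dist_le_of_mem_Icc_01 (iterate_mem_Icc hne hx (List.length_replicate).ge)
    (iterate_mem_Icc hne hy (List.length_replicate).ge)
  have hkδ' : 1 ≤ k * δ := by rwa [Nat.ceil_le, div_le_iff₀ hδ] at hkδ
  linarith

section Neutral

variable {N : Set (S × ℝ)} (hexp : ∀ a, ∀ x ∈ M.Δ a, (a, x) ∉ N → 1 < |M.f' a x|)
include hexp

theorem one_le_abs_f' (hN : ∀ p ∈ N, |M.f' p.1 p.2| = 1) (a : S) :
    ∀ x ∈ M.Δ a, 1 ≤ |M.f' a x| := fun x hx => by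
  by_cases h : (a, x) ∈ N
  exacts [(hN _ h).ge, (hexp a x hx h).le]

theorem ae_one_lt_abs_f' (hfin : N.Finite) (a : S) : ∀ᵐ x, x ∈ M.Δ a → 1 < |M.f' a x| := by
  have hnull : volume (Prod.mk a ⁻¹' N) = 0 :=
    (hfin.preimage (Prod.mk_right_injective a).injOn).measure_zero volume
  filter_upwards [measure_eq_zero_iff_ae_notMem.1 hnull] with x hxN hx using hexp a x hx hxN

end Neutral

end MarkovMap

theorem M3_implies_uniform_decay_general
    {S : Type} (M : MarkovMap S)
    (N : Set (S × ℝ)) (hfin : N.Finite)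
    (hNmem : ∀ p ∈ N, p.2 ∈ M.Δ p.1 ∧ |M.f' p.1 p.2| = 1)
    (hexp : ∀ a, ∀ x ∈ M.Δ a, (a, x) ∉ N → 1 < |M.f' a x|)
    (s : ℝ) (hs : 1 < s)
    (hM3 : ∀ a₁ a₂ : S, M.Δ a₂ ⊆ M.f '' M.Δ a₁ →
      ((∀ x : ℝ, (a₂, x) ∉ N) ∨ a₁ ≠ a₂) →
      ∀ x ∈ M.cyl [a₁, a₂], s ≤ |M.f' a₂ (M.f x) * M.f' a₁ x|) :
    M.UniformDecay := by
  have h1 := MarkovMap.one_le_abs_f' hexp fun p hp => (hNmem p hp).2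
  intro ε hε
  obtain ⟨k, hk2, hblock⟩ : ∃ k, 2 ≤ k ∧ ∀ a ∈ Prod.fst '' N,
      ∀ x ∈ M.cyl (List.replicate k a), ∀ y ∈ M.cyl (List.replicate k a), dist x y ≤ ε / 2 :=
    ((eventually_ge_atTop 2).and ((hfin.image Prod.fst).eventually_all.2 fun a _ =>
      MarkovMap.eventually_dist_le_of_mem_cyl_replicate (h1 a)
        (MarkovMap.ae_one_lt_abs_f' hexp hfin a) (half_pos hε))).exists
  obtain ⟨G, hG⟩ := pow_unbounded_of_one_lt (2 / ε) hs
  refine ⟨G * k, fun w hw hlen => (Metric.diam_le_of_forall_dist_le (half_pos hε).le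
    fun x hx y hy => ?_).trans_lt (half_lt_self hε)⟩
  by_cases hbad : ∃ v, v <:+: w ∧ v.length = k ∧
      v.IsChain fun a₁ a₂ => ¬((∀ x : ℝ, (a₂, x) ∉ N) ∨ a₁ ≠ a₂)
  · obtain ⟨v, hvw, hvk, hv⟩ := hbad
    obtain ⟨a, ⟨x₀, ha⟩, hva⟩ := List.exists_eq_replicate_of_isChain
      (hv.imp fun a₁ a₂ h => by simpa using h) (hvk ▸ hk2)
    rw [hvk] at hva
    exact MarkovMap.dist_le_of_isInfix h1 hvw hx hy (hva ▸ hblock a ⟨_, ha, rfl⟩)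
  · have hexpand := MarkovMap.pow_mul_dist_le_dist_iterate h1 (by positivity) hM3 hw.2
      (fun v hvw hvk hv => hbad ⟨v, hvw, hvk, hv⟩) hlen hx hy
    have hunit := Real.dist_le_of_mem_Icc_01 (MarkovMap.iterate_mem_Icc hw.1 hx hlen)
      (MarkovMap.iterate_mem_Icc hw.1 hy hlen)
    rw [div_lt_iff₀ hε] at hG
    nlinarith

/-- **(M3) implies uniform decay of cylinders** (Lemma 5.1). Let `f` be a non-uniformly
expanding Markov map, with neutral set `N` witnessing the non-uniform expansion. Assume
there is `s > 1` such that for every admissible word `a₁a₂` of length 2 such that `a₂`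
is an expanding index or `a₁ ≠ a₂`, one has `|(f²)'| ≥ s` on `Δ_{a₁a₂}`. Then `f` has
uniform decay of cylinders. -/
theorem M3_implies_uniform_decay
    {S : Type} [Countable S] (M : MarkovMap S)
    (N : Set (S × ℝ)) (hfin : N.Finite)
    (hNmem : ∀ p ∈ N, p.2 ∈ M.Δ p.1 ∧ |M.f' p.1 p.2| = 1)
    (hexp : ∀ a, ∀ x ∈ M.Δ a, (a, x) ∉ N → 1 < |M.f' a x|)
    (s : ℝ) (hs : 1 < s)
    (hM3 : ∀ a₁ a₂ : S, M.Δ a₂ ⊆ M.f '' M.Δ a₁ →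
      ((∀ x : ℝ, (a₂, x) ∉ N) ∨ a₁ ≠ a₂) →
      ∀ x ∈ M.cyl [a₁, a₂], s ≤ |M.f' a₂ (M.f x) * M.f' a₁ x|) :
    M.UniformDecay :=
  M3_implies_uniform_decay_general M N hfin hNmem hexp s hs hM3
end

section
/- Let f : Δ → [0,1] be a non-uniformly expanding Markov map with uniform decay of cylinders, satisfying Rényi's condition: each branch f_a is C² and sup_{a∈S} sup_{x∈Δ_a} |f_a''(x)|/|f_a'(x)|² < ∞. Then f has mild distortion, i.e. D_1(log|f'|) < ∞ and D_n(log|f'|)/n → 0 as n → ∞. -/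
open Filter MeasureTheory Set

section Aux

namespace MarkovMap

variable {S : Type} (M : MarkovMap S)

lemma logAbsDeriv_hasDeriv (f'' : S → ℝ → ℝ)
    (hC2 : ∀ a, ∀ x ∈ M.Δ a, HasDerivWithinAt (M.f' a) (f'' a x) (M.Δ a) x)
    (a : S) {x : ℝ} (hx : x ∈ M.Δ a) :
    HasDerivWithinAt (fun y => Real.log |M.f' a y|) (f'' a x / M.f' a x) (M.Δ a) x := by
  have h : (fun y => Real.log |M.f' a y|) = fun y => Real.log (M.f' a y) := by
    funext y; rw [Real.log_abs]
  rw [h]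
  exact (hC2 a x hx).log (M.derivNe a x hx)

lemma deriv_sign (a : S) :
    ∃ ε : ℝ, |ε| = 1 ∧ ∀ x ∈ M.Δ a, |M.f' a x| = ε * M.f' a x := by
  have hOC : Set.OrdConnected (M.f' a '' M.Δ a) :=
    ((M.conn a).image _ (M.derivCont a)).ordConnected
  have hzero : (0:ℝ) ∉ M.f' a '' M.Δ a := by
    rintro ⟨z, hz, hz0⟩
    exact M.derivNe a z hz hz0
  obtain ⟨x₀, hx₀⟩ := M.nonempty a
  rcases (M.derivNe a x₀ hx₀).lt_or_gt with hneg | hpos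
  · refine ⟨-1, by norm_num, fun x hx => ?_⟩
    have hx' : M.f' a x < 0 := by
      by_contra h
      push_neg at h
      have h' : 0 < M.f' a x := lt_of_le_of_ne h (Ne.symm (M.derivNe a x hx))
      exact hzero (hOC.out ⟨x₀, hx₀, rfl⟩ ⟨x, hx, rfl⟩ ⟨le_of_lt hneg, le_of_lt h'⟩)
    rw [abs_of_neg hx']; ring
  · refine ⟨1, by norm_num, fun x hx => ?_⟩
    have hx' : 0 < M.f' a x := by
      by_contra h
      push_neg at h
      have h' : M.f' a x < 0 := lt_of_le_of_ne h (M.derivNe a x hx)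
      exact hzero (hOC.out ⟨x, hx, rfl⟩ ⟨x₀, hx₀, rfl⟩ ⟨le_of_lt h', le_of_lt hpos⟩)
    rw [abs_of_pos hx']; ring

lemma branch_log_lipschitz (f'' : S → ℝ → ℝ)
    (hC2 : ∀ a, ∀ x ∈ M.Δ a, HasDerivWithinAt (M.f' a) (f'' a x) (M.Δ a) x)
    (K : ℝ) (hK0 : 0 ≤ K)
    (hK : ∀ a, ∀ x ∈ M.Δ a, |f'' a x| ≤ K * (M.f' a x) ^ 2)
    (a : S) {u v : ℝ} (hu : u ∈ M.Δ a) (hv : v ∈ M.Δ a) :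
    Real.log |M.f' a u| - Real.log |M.f' a v| ≤ K * |M.f u - M.f v| := by
  obtain ⟨ε, hε, habs⟩ := M.deriv_sign a
  set C := K * ε with hC
  have hconv : Convex ℝ (M.Δ a) := ((M.conn a).ordConnected).convex
  have hfc : ContinuousOn M.f (M.Δ a) := fun x hx => (M.hasDeriv a x hx).continuousWithinAt
  have hgc : ContinuousOn (fun y => Real.log |M.f' a y|) (M.Δ a) := by
    have h : (fun y => Real.log |M.f' a y|) = fun y => Real.log (M.f' a y) := by
      funext y; rw [Real.log_abs]
    rw [h]
    exact (M.derivCont a).log (M.derivNe a)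
  have hbound : ∀ x ∈ M.Δ a, |f'' a x / M.f' a x| ≤ C * M.f' a x := by
    intro x hx
    have h2 : 0 < |M.f' a x| := abs_pos.2 (M.derivNe a x hx)
    rw [abs_div, div_le_iff₀ h2]
    have h3 : C * M.f' a x = K * |M.f' a x| := by
      rw [hC, mul_assoc, ← habs x hx]
    rw [h3]
    calc |f'' a x| ≤ K * (M.f' a x) ^ 2 := hK a x hx
      _ = K * |M.f' a x| * |M.f' a x| := by rw [← sq_abs]; ring
  have mono1 : MonotoneOn (fun x => C * M.f x - Real.log |M.f' a x|) (M.Δ a) := by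
    refine monotoneOn_of_hasDerivWithinAt_nonneg hconv
      ((continuousOn_const.mul hfc).sub hgc)
      (fun x hx => ((((M.hasDeriv a x (interior_subset hx)).const_mul C).sub
        (M.logAbsDeriv_hasDeriv f'' hC2 a (interior_subset hx))).mono interior_subset))
      (fun x hx => ?_)
    have h1 := hbound x (interior_subset hx)
    have h2 := le_abs_self (f'' a x / M.f' a x)
    linarith
  have mono2 : MonotoneOn (fun x => C * M.f x + Real.log |M.f' a x|) (M.Δ a) := by
    refine monotoneOn_of_hasDerivWithinAt_nonneg hconv
      ((continuousOn_const.mul hfc).add hgc)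
      (fun x hx => ((((M.hasDeriv a x (interior_subset hx)).const_mul C).add
        (M.logAbsDeriv_hasDeriv f'' hC2 a (interior_subset hx))).mono interior_subset))
      (fun x hx => ?_)
    have h1 := hbound x (interior_subset hx)
    have h2 := neg_abs_le (f'' a x / M.f' a x)
    linarith
  have hεabs : ∀ t : ℝ, ε * t ≤ |t| := fun t =>
    (le_abs_self _).trans_eq (by rw [abs_mul, hε, one_mul])
  rcases le_total v u with h | h
  · have h1 := mono1 hv hu h
    simp only at h1
    have h2 : K * (ε * (M.f u - M.f v)) ≤ K * |M.f u - M.f v| :=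
      mul_le_mul_of_nonneg_left (hεabs _) hK0
    have h3 : C * M.f u - C * M.f v = K * (ε * (M.f u - M.f v)) := by rw [hC]; ring
    linarith
  · have h1 := mono2 hu hv h
    simp only at h1
    have h2 : K * (ε * (M.f v - M.f u)) ≤ K * |M.f v - M.f u| :=
      mul_le_mul_of_nonneg_left (hεabs _) hK0
    have h3 : C * M.f v - C * M.f u = K * (ε * (M.f v - M.f u)) := by rw [hC]; ring
    rw [abs_sub_comm] at h2
    linarith

lemma cyl_subset {w : List S} (hw : w ≠ []) :
    M.cyl w ⊆ Set.Icc 0 1 := by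
  intro x hx
  have hl : 0 < w.length := List.length_pos_iff.2 hw
  have h := hx ⟨0, hl⟩
  simp only [Function.iterate_zero_apply] at h
  exact M.subset_unit _ h

lemma mem_cyl_drop {w : List S} {x : ℝ} (hx : x ∈ M.cyl w) (k : ℕ) :
    M.f^[k] x ∈ M.cyl (w.drop k) := by
  rintro ⟨i, hi⟩
  have hi' : k + i < w.length := by
    have h := hi; rw [List.length_drop] at h; omega
  have hmem := hx ⟨k + i, hi'⟩
  simp only [List.get_eq_getElem] at hmem ⊢
  rw [List.getElem_drop]
  have h : M.f^[i] (M.f^[k] x) = M.f^[k + i] x := by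
    rw [← Function.iterate_add_apply, Nat.add_comm]
  rw [h]
  exact hmem

lemma adm_drop {w : List S} (hw : M.Adm w) {k : ℕ} (hk : k < w.length) :
    M.Adm (w.drop k) := by
  refine ⟨?_, hw.2.drop k⟩
  apply List.ne_nil_of_length_pos
  rw [List.length_drop]; omega

end MarkovMap

end Aux

/-- **Rényi's condition implies mild distortion** (Lemma 3.3). Let `f` be a
non-uniformly expanding Markov map with uniform decay of cylinders whose branches are
C² (with branch second derivatives `f''`) and satisfy Rényi's condition
`sup_a sup_{Δ_a} |f''|/|f'|² < ∞`. Then `f` has mild distortion. -/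
theorem renyi_condition_implies_mild_distortion
    {S : Type} [Countable S] (M : MarkovMap S)
    (hNE : M.NonUnifExp) (hUD : M.UniformDecay)
    (f'' : S → ℝ → ℝ)
    (hC2 : ∀ a, ∀ x ∈ M.Δ a, HasDerivWithinAt (M.f' a) (f'' a x) (M.Δ a) x)
    (hC2cont : ∀ a, ContinuousOn (f'' a) (M.Δ a))
    (hRenyi : ∃ K : ℝ, ∀ a, ∀ x ∈ M.Δ a, |f'' a x| / |M.f' a x| ^ 2 ≤ K) :
    M.MildDistortion := by
  classical
  obtain ⟨K₀, hK₀⟩ := hRenyi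
  set K := max K₀ 0 with hKdef
  have hK0 : 0 ≤ K := le_max_right _ _
  have hK : ∀ a, ∀ x ∈ M.Δ a, |f'' a x| ≤ K * (M.f' a x) ^ 2 := by
    intro a x hx
    have h2 : 0 < |M.f' a x| ^ 2 := pow_pos (abs_pos.2 (M.derivNe a x hx)) 2
    have h3 := (div_le_iff₀ h2).1 ((hK₀ a x hx).trans (le_max_left K₀ 0))
    calc |f'' a x| ≤ K * |M.f' a x| ^ 2 := h3
      _ = K * (M.f' a x) ^ 2 := by rw [sq_abs]
  set ρ : ℕ → ℝ := fun k =>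
    if k = 0 then 1 else
      sSup ((fun w => Metric.diam (M.cyl w)) '' {w : List S | M.Adm w ∧ w.length = k})
    with hρdef
  have hρ0 : ∀ k, 0 ≤ ρ k := by
    intro k
    by_cases hk : k = 0
    · simp [hρdef, hk]
    · simp only [hρdef, if_neg hk]
      apply Real.sSup_nonneg
      rintro x ⟨w, -, rfl⟩
      exact Metric.diam_nonneg
  have hdiam : ∀ w : List S, M.Adm w → Metric.diam (M.cyl w) ≤ ρ w.length := by
    intro w hw
    have hne : w.length ≠ 0 := fun h => hw.1 (List.length_eq_zero_iff.1 h)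
    simp only [hρdef, if_neg hne]
    apply le_csSup
    · refine ⟨1, ?_⟩
      rintro x ⟨v, ⟨hv, -⟩, rfl⟩
      calc Metric.diam (M.cyl v) ≤ Metric.diam (Set.Icc (0:ℝ) 1) :=
            Metric.diam_mono (M.cyl_subset hv.1) (Metric.isBounded_Icc (0:ℝ) 1)
        _ = 1 := by rw [Real.diam_Icc (by norm_num)]; norm_num
    · exact ⟨w, ⟨hw, rfl⟩, rfl⟩
  have hρtend : Tendsto ρ atTop (nhds 0) := by
    rw [Metric.tendsto_atTop]
    intro ε hε
    obtain ⟨N, hN⟩ := hUD (ε/2) (by linarith)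
    refine ⟨max N 1, fun n hn => ?_⟩
    have hn1 : n ≠ 0 := by
      have := le_trans (le_max_right N 1) hn; omega
    have hNn : N ≤ n := le_trans (le_max_left _ _) hn
    have hρn : ρ n ≤ ε/2 := by
      simp only [hρdef, if_neg hn1]
      apply Real.sSup_le _ (by linarith)
      rintro x ⟨w, ⟨hw, hlen⟩, rfl⟩
      exact le_of_lt (hN w hw (by rw [hlen]; exact hNn))
    rw [Real.dist_eq, sub_zero, abs_of_nonneg (hρ0 n)]
    linarith
  refine ⟨fun n => K * ∑ k ∈ Finset.range n, ρ k, ?_, ?_⟩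
  · intro w hw x hx y hy
    have hterm : ∀ j : Fin w.length,
        Real.log |M.f' (w.get j) (M.f^[(j:ℕ)] x)| -
          Real.log |M.f' (w.get j) (M.f^[(j:ℕ)] y)|
          ≤ K * ρ (w.length - 1 - (j:ℕ)) := by
      intro j
      have hu : M.f^[(j:ℕ)] x ∈ M.Δ (w.get j) := hx j
      have hv : M.f^[(j:ℕ)] y ∈ M.Δ (w.get j) := hy j
      have hbr := M.branch_log_lipschitz f'' hC2 K hK0 hK (w.get j) hu hv
      have hiterx : M.f (M.f^[(j:ℕ)] x) = M.f^[(j:ℕ)+1] x :=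
        (Function.iterate_succ_apply' M.f _ x).symm
      have hitery : M.f (M.f^[(j:ℕ)] y) = M.f^[(j:ℕ)+1] y :=
        (Function.iterate_succ_apply' M.f _ y).symm
      rw [hiterx, hitery] at hbr
      have hdist : |M.f^[(j:ℕ)+1] x - M.f^[(j:ℕ)+1] y| ≤ ρ (w.length - 1 - (j:ℕ)) := by
        rcases eq_or_lt_of_le (Nat.succ_le_of_lt j.isLt) with heq | hlt
        · have h0 : w.length - 1 - (j:ℕ) = 0 := by omega
          have hρ1 : ρ (w.length - 1 - (j:ℕ)) = 1 := by rw [h0]; simp [hρdef]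
          rw [hρ1]
          have hx1 : M.f^[(j:ℕ)+1] x ∈ Set.Icc (0:ℝ) 1 := by
            rw [← hiterx]; exact M.maps_unit _ hu
          have hy1 : M.f^[(j:ℕ)+1] y ∈ Set.Icc (0:ℝ) 1 := by
            rw [← hitery]; exact M.maps_unit _ hv
          rw [abs_sub_le_iff]
          constructor <;> linarith [hx1.1, hx1.2, hy1.1, hy1.2]
        · have hadm := M.adm_drop hw (show (j:ℕ)+1 < w.length from hlt)
          have hmx := M.mem_cyl_drop hx ((j:ℕ)+1)
          have hmy := M.mem_cyl_drop hy ((j:ℕ)+1)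
          have hbd : Bornology.IsBounded (M.cyl (w.drop ((j:ℕ)+1))) :=
            (Metric.isBounded_Icc (0:ℝ) 1).subset (M.cyl_subset hadm.1)
          have hlen : (w.drop ((j:ℕ)+1)).length = w.length - 1 - (j:ℕ) := by
            rw [List.length_drop]; omega
          calc |M.f^[(j:ℕ)+1] x - M.f^[(j:ℕ)+1] y|
              = dist (M.f^[(j:ℕ)+1] x) (M.f^[(j:ℕ)+1] y) := (Real.dist_eq _ _).symm
            _ ≤ Metric.diam (M.cyl (w.drop ((j:ℕ)+1))) :=
                Metric.dist_le_diam_of_mem hbd hmx hmy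
            _ ≤ ρ ((w.drop ((j:ℕ)+1)).length) := hdiam _ hadm
            _ = ρ (w.length - 1 - (j:ℕ)) := by rw [hlen]
      exact hbr.trans (mul_le_mul_of_nonneg_left hdist hK0)
    have hsplit : M.logDerivSum w x - M.logDerivSum w y =
        ∑ j : Fin w.length,
          (Real.log |M.f' (w.get j) (M.f^[(j:ℕ)] x)| -
            Real.log |M.f' (w.get j) (M.f^[(j:ℕ)] y)|) := by
      rw [MarkovMap.logDerivSum, MarkovMap.logDerivSum, ← Finset.sum_sub_distrib]
    rw [hsplit]
    calc ∑ j : Fin w.length,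
          (Real.log |M.f' (w.get j) (M.f^[(j:ℕ)] x)| -
            Real.log |M.f' (w.get j) (M.f^[(j:ℕ)] y)|)
        ≤ ∑ j : Fin w.length, K * ρ (w.length - 1 - (j:ℕ)) :=
          Finset.sum_le_sum (fun j _ => hterm j)
      _ = ∑ j ∈ Finset.range w.length, K * ρ (w.length - 1 - j) :=
          Fin.sum_univ_eq_sum_range (fun j => K * ρ (w.length - 1 - j)) w.length
      _ = ∑ j ∈ Finset.range w.length, K * ρ j :=
          Finset.sum_range_reflect (fun j => K * ρ j) _
      _ = K * ∑ j ∈ Finset.range w.length, ρ j := by rw [Finset.mul_sum]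
  · have h1 : Tendsto (fun n : ℕ => (n : ℝ)⁻¹ * ∑ i ∈ Finset.range n, ρ i)
        atTop (nhds 0) := hρtend.cesaro
    have h2 := h1.const_mul K
    rw [mul_zero] at h2
    exact h2.congr (fun n => by rw [div_eq_mul_inv]; ring)
end

section
/- The Rényi map has uniform decay of cylinders: sup over words w = (w_1,…,w_n) of integers ≥ 2 of diam(Δ_w) tends to 0 as n → ∞, where Δ_w = {x ∈ [0,1) : b_j(x) = w_j for 1 ≤ j ≤ n}. -/
open Filter MeasureTheory Set

/-!
Each digit `m = b_1(x)` gives the inverse branch `x = (m - 2 + f x) / (m - 1 + f x)`, so on a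
cylinder of length `n` the point `x` is a Möbius image `(A u + C) / (B u + D)` of `u = fⁿ(x) ∈ [0,1)`,
with nonnegative coefficients of determinant `1`. Each branch raises `B + D` by at least `A + C ≥ 1`,
so `B + D ≥ n + 1`; and a determinant-one Möbius map of this shape squeezes `[0,1]` into an interval
of length at most `1 / (B + D)`. Hence every `n`-cylinder has diameter at most `1 / (n + 1)`.
-/

lemma renyi_mem_Ico (x : ℝ) : renyi x ∈ Ico (0 : ℝ) 1 :=
  ⟨Int.fract_nonneg _, Int.fract_lt_one _⟩

lemma iterate_renyi_mem_Ico {x : ℝ} (hx : x ∈ Ico (0 : ℝ) 1) (n : ℕ) :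
    renyi^[n] x ∈ Ico (0 : ℝ) 1 :=
  (MapsTo.iterate (fun y _ => renyi_mem_Ico y : MapsTo renyi (Ico 0 1) (Ico 0 1)) n) hx

lemma bcf_add_two (i : ℕ) (x : ℝ) : bcf (i + 2) x = bcf (i + 1) (renyi x) :=
  rfl

lemma renyi_mem_rcyl_tail {n : ℕ} {w : Fin (n + 1) → ℤ} {x : ℝ} (hx : x ∈ rcyl (n + 1) w) :
    renyi x ∈ rcyl n (Fin.tail w) :=
  ⟨renyi_mem_Ico x, fun i => by rw [Fin.tail, ← bcf_add_two]; exact hx.2 i.succ⟩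

lemma mul_renyi_add_bcf_one {x : ℝ} (hx : x ≠ 1) :
    x * (renyi x + bcf 1 x - 1) = renyi x + bcf 1 x - 2 := by
  have h1x : 1 - x ≠ 0 := sub_ne_zero.mpr hx.symm
  simp only [renyi, bcf, Nat.sub_self, Function.iterate_zero_apply, Int.cast_add, Int.cast_one]
  field_simp
  ring

theorem exists_moebius_rcyl (n : ℕ) (w : Fin n → ℤ) (hw : ∀ i, 2 ≤ w i) :
    ∃ A B C D : ℝ, 0 ≤ A ∧ 0 ≤ B ∧ 0 ≤ C ∧ 1 ≤ D ∧ 1 ≤ A + C ∧ (n : ℝ) + 1 ≤ B + D ∧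
      A * D - B * C = 1 ∧
      ∀ x ∈ rcyl n w, x * (B * renyi^[n] x + D) = A * renyi^[n] x + C := by
  induction n with
  | zero => exact ⟨1, 0, 0, 1, by norm_num⟩
  | succ n ih =>
    obtain ⟨A, B, C, D, hA, hB, hC, hD, hAC, hBD, hdet, hx⟩ :=
      ih (Fin.tail w) fun i => hw i.succ
    obtain ⟨k, hk, hwk⟩ : ∃ k : ℝ, 1 ≤ k ∧ (w 0 : ℝ) = k + 1 :=
      ⟨w 0 - 1, by linarith [show (2 : ℝ) ≤ w 0 by exact_mod_cast hw 0], by ring⟩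
    -- compose with the inverse branch `y ↦ (k - 1 + y) / (k + y)`, of matrix `!![1, k - 1; 1, k]`
    refine ⟨(k - 1) * B + A, k * B + A, (k - 1) * D + C, k * D + C, by nlinarith, by nlinarith,
      by nlinarith, by nlinarith, by nlinarith, by push_cast; nlinarith, by linear_combination hdet,
      fun x hxw => ?_⟩
    have hy := hx _ (renyi_mem_rcyl_tail hxw)
    have hstep := mul_renyi_add_bcf_one hxw.1.2.ne
    rw [show bcf 1 x = w 0 from hxw.2 0, hwk] at hstep
    rw [Function.iterate_succ_apply]
    linear_combination (B * renyi^[n] (renyi x) + D) * hstep - (x - 1) * hy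

lemma abs_sub_mul_le_one_of_moebius {A B C D u v x y : ℝ} (hB : 0 ≤ B) (hD : 1 ≤ D)
    (hdet : A * D - B * C = 1) (hu : u ∈ Icc (0 : ℝ) 1) (hv : v ∈ Icc (0 : ℝ) 1)
    (hx : x * (B * u + D) = A * u + C) (hy : y * (B * v + D) = A * v + C) :
    |x - y| * (B + D) ≤ 1 := by
  have hP : 1 ≤ B * u + D := by nlinarith [hu.1]
  have hQ : 1 ≤ B * v + D := by nlinarith [hv.1]
  have key : (x - y) * ((B * u + D) * (B * v + D)) = u - v := by
    linear_combination (B * v + D) * hx - (B * u + D) * hy + (u - v) * hdet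
  -- `|u - v| ≤ max u v` and `max u v * (B + D) ≤ B * max u v + D` since `max u v ≤ 1`
  have huv : |u - v| * (B + D) ≤ (B * u + D) * (B * v + D) := by
    rcases le_total v u with h | h
    · rw [abs_of_nonneg (sub_nonneg.mpr h)]
      nlinarith [hu.2, hv.1, mul_nonneg (sub_nonneg.mpr hu.2) (by linarith : (0 : ℝ) ≤ D)]
    · rw [abs_of_nonpos (sub_nonpos.mpr h)]
      nlinarith [hv.2, hu.1, mul_nonneg (sub_nonneg.mpr hv.2) (by linarith : (0 : ℝ) ≤ D)]
  have hPQ : 0 < (B * u + D) * (B * v + D) := by positivity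
  have habs : |x - y| * ((B * u + D) * (B * v + D)) = |u - v| := by
    rw [← key, abs_mul, abs_of_pos hPQ]
  refine le_of_mul_le_mul_right ?_ hPQ
  calc |x - y| * (B + D) * ((B * u + D) * (B * v + D)) = |u - v| * (B + D) := by
        rw [← habs]; ring
    _ ≤ 1 * ((B * u + D) * (B * v + D)) := by rw [one_mul]; exact huv

theorem diam_rcyl_le (n : ℕ) (w : Fin n → ℤ) (hw : ∀ i, 2 ≤ w i) :
    Metric.diam (rcyl n w) ≤ 1 / ((n : ℝ) + 1) := by
  obtain ⟨A, B, C, D, -, hB, -, hD, -, hBD, hdet, hmoeb⟩ := exists_moebius_rcyl n w hw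
  refine Metric.diam_le_of_forall_dist_le (by positivity) fun x hx y hy => ?_
  have h := abs_sub_mul_le_one_of_moebius hB hD hdet
    (Ico_subset_Icc_self (iterate_renyi_mem_Ico hx.1 n))
    (Ico_subset_Icc_self (iterate_renyi_mem_Ico hy.1 n)) (hmoeb x hx) (hmoeb y hy)
  rw [Real.dist_eq, le_div_iff₀ (by positivity)]
  exact (mul_le_mul_of_nonneg_left hBD (abs_nonneg _)).trans h

/-- **Uniform decay of cylinders for the Rényi map**: the supremum over words `w` of
length `n` (of integers `≥ 2`) of the diameter of the cylinder `Δ_w` tends to `0` as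
`n → ∞`. -/
theorem renyi_uniform_decay_of_cylinders :
    ∀ ε : ℝ, 0 < ε → ∃ N : ℕ, ∀ n : ℕ, N ≤ n →
      ∀ w : Fin n → ℤ, (∀ i, 2 ≤ w i) → Metric.diam (rcyl n w) < ε := by
  intro ε hε
  obtain ⟨N, hN⟩ := eventually_atTop.1
    ((tendsto_order.1 tendsto_one_div_add_atTop_nhds_zero_nat).2 ε hε)
  exact ⟨N, fun n hn w hw => (diam_rcyl_le n w hw).trans_lt (hN n hn)⟩
end

section
/- Let f : [0,1] → [0,1] be the Farey map, f(x) = x/(1−x) for 0 ≤ x < 1/2 and f(x) = (1−x)/x for 1/2 ≤ x ≤ 1, with partition Δ_0 = [0,1/2), Δ_1 = [1/2,1]. For ω = (ω_0,…,ω_{n−1}) ∈ {0,1}ⁿ set Δ_ω = ⋂_{j=0}^{n−1} f^{−j}(Δ_{ω_j}). Then sup_{ω ∈ {0,1}ⁿ} diam(Δ_ω) → 0 as n → ∞; that is, the Farey map has uniform decay of cylinders. -/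
open Filter Set

/-- The Farey map `f(x) = x/(1−x)` on `[0,1/2)` and `f(x) = (1−x)/x` on `[1/2,1]`. -/
noncomputable def farey (x : ℝ) : ℝ := if x < 1 / 2 then x / (1 - x) else (1 - x) / x

/-- The Markov partition `{[0,1/2), [1/2,1]}` of the Farey map. -/
def fareyPart : Fin 2 → Set ℝ := ![Set.Ico 0 (1 / 2), Set.Icc (1 / 2) 1]

/-- The cylinder `Δ_ω = ⋂_{j<n} f^{−j}(Δ_{ω_j})` of a word `ω ∈ {0,1}ⁿ` for the
Farey map. -/
def fareyCyl (n : ℕ) (ω : Fin n → Fin 2) : Set ℝ :=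
  {x | ∀ j : Fin n, farey^[(j : ℕ)] x ∈ fareyPart (ω j)}

set_option maxHeartbeats 1000000 in
lemma fareyCyl_key (n : ℕ) : ∀ ω : Fin (n+1) → Fin 2,
    ∃ a b c d : ℕ, 1 ≤ d ∧ 1 ≤ a + b ∧ ((a:ℤ)*d - b*c).natAbs = 1 ∧
      n + 2 ≤ d * (c + d) ∧
      fareyCyl (n+1) ω ⊆ Set.uIcc ((b:ℝ)/d) ((a+b)/(c+d)) := by
  induction n with
  | zero =>
    intro ω
    rcases Fin.exists_fin_two.mp ⟨ω 0, rfl⟩ with h | h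
    · refine ⟨1, 0, 1, 1, le_refl _, by norm_num, by norm_num, by norm_num, ?_⟩
      intro x hx
      have h0 := hx 0
      rw [h] at h0
      simp only [fareyPart] at h0
      norm_num at h0
      rw [Set.mem_uIcc]
      left
      push_cast
      norm_num
      exact ⟨h0.1, le_of_lt h0.2⟩
    · refine ⟨0, 1, 1, 1, le_refl _, by norm_num, by norm_num, by norm_num, ?_⟩
      intro x hx
      have h0 := hx 0
      rw [h] at h0
      simp only [fareyPart] at h0
      norm_num at h0
      rw [Set.mem_uIcc]
      right
      push_cast
      norm_num
      exact ⟨h0.1, h0.2⟩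
  | succ n IH =>
    intro ω
    obtain ⟨a, b, c, d, hd, hab, hdet, hprod, hsub⟩ := IH (ω ∘ Fin.succ)
    have hdR : (1:ℝ) ≤ d := by exact_mod_cast hd
    have hbR : (0:ℝ) ≤ b := Nat.cast_nonneg b
    have haR : (0:ℝ) ≤ a := Nat.cast_nonneg a
    have hcR : (0:ℝ) ≤ c := Nat.cast_nonneg c
    have habR : (1:ℝ) ≤ (a:ℝ) + b := by exact_mod_cast hab
    have hmem : ∀ x, x ∈ fareyCyl (n+2) ω →
        x ∈ fareyPart (ω 0) ∧ farey x ∈ Set.uIcc ((b:ℝ)/d) ((a+b)/(c+d)) := by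
      intro x hx
      refine ⟨by simpa using hx 0, hsub ?_⟩
      intro j
      have h := hx j.succ
      simp only [Fin.val_succ, Function.iterate_succ_apply] at h
      exact h
    rcases Fin.exists_fin_two.mp ⟨ω 0, rfl⟩ with h | h
    · -- left branch: new matrix (a, b, a+c, b+d)
      refine ⟨a, b, a+c, b+d, by omega, hab, ?_, by nlinarith, ?_⟩
      · rw [show ((a:ℤ)*((b:ℕ)+(d:ℕ):ℕ) - (b:ℕ)*((a:ℕ)+(c:ℕ):ℕ)) = (a:ℤ)*d - b*c by
          push_cast; ring]
        exact hdet
      · intro x hx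
        obtain ⟨hx0, hy⟩ := hmem x hx
        rw [h] at hx0
        simp only [fareyPart, Matrix.cons_val_zero, Set.mem_Ico] at hx0
        obtain ⟨hx1, hx2⟩ := hx0
        have h1x : (0:ℝ) < 1 - x := by linarith
        have hfx : farey x = x / (1 - x) := if_pos hx2
        rw [hfx] at hy
        rw [Set.mem_uIcc] at hy ⊢
        push_cast
        rcases hy with ⟨h1, h2⟩ | ⟨h1, h2⟩
        · rw [div_le_div_iff₀ (by linarith) h1x] at h1
          rw [div_le_div_iff₀ h1x (by linarith)] at h2
          left
          constructor
          · rw [div_le_iff₀ (by linarith : (0:ℝ) < (b:ℝ) + d)]; nlinarith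
          · rw [le_div_iff₀ (by linarith : (0:ℝ) < (a:ℝ) + c + ((b:ℝ) + d))]; nlinarith
        · rw [div_le_div_iff₀ (by linarith) h1x] at h1
          rw [div_le_div_iff₀ h1x (by linarith)] at h2
          right
          constructor
          · rw [div_le_iff₀ (by linarith : (0:ℝ) < (a:ℝ) + c + ((b:ℝ) + d))]; nlinarith
          · rw [le_div_iff₀ (by linarith : (0:ℝ) < (b:ℝ) + d)]; nlinarith
    · -- right branch: new matrix (c, d, a+c, b+d)
      refine ⟨c, d, a+c, b+d, by omega, by omega, ?_, by nlinarith, ?_⟩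
      · rw [show ((c:ℤ)*((b:ℕ)+(d:ℕ):ℕ) - (d:ℕ)*((a:ℕ)+(c:ℕ):ℕ)) = -((a:ℤ)*d - b*c) by
          push_cast; ring, Int.natAbs_neg]
        exact hdet
      · intro x hx
        obtain ⟨hx0, hy⟩ := hmem x hx
        rw [h] at hx0
        simp only [fareyPart, Matrix.cons_val_one, Matrix.head_cons, Set.mem_Icc] at hx0
        obtain ⟨hx1, hx2⟩ := hx0
        have hxpos : (0:ℝ) < x := by linarith
        have hfx : farey x = (1 - x) / x := if_neg (by linarith)
        rw [hfx] at hy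
        rw [Set.mem_uIcc] at hy ⊢
        push_cast
        rcases hy with ⟨h1, h2⟩ | ⟨h1, h2⟩
        · rw [div_le_div_iff₀ (by linarith) hxpos] at h1
          rw [div_le_div_iff₀ hxpos (by linarith)] at h2
          right
          constructor
          · rw [div_le_iff₀ (by linarith : (0:ℝ) < (a:ℝ) + c + ((b:ℝ) + d))]; nlinarith
          · rw [le_div_iff₀ (by linarith : (0:ℝ) < (b:ℝ) + d)]; nlinarith
        · rw [div_le_div_iff₀ (by linarith) hxpos] at h1
          rw [div_le_div_iff₀ hxpos (by linarith)] at h2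
          left
          constructor
          · rw [div_le_iff₀ (by linarith : (0:ℝ) < (b:ℝ) + d)]; nlinarith
          · rw [le_div_iff₀ (by linarith : (0:ℝ) < (a:ℝ) + c + ((b:ℝ) + d))]; nlinarith

/-- **The Farey map has uniform decay of cylinders**:
`sup_{ω ∈ {0,1}ⁿ} diam Δ_ω → 0` as `n → ∞`. -/
theorem farey_uniform_decay_of_cylinders :
    ∀ ε : ℝ, 0 < ε → ∃ N : ℕ, ∀ n : ℕ, N ≤ n →
      ∀ ω : Fin n → Fin 2, Metric.diam (fareyCyl n ω) < ε := by
  intro ε hε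
  obtain ⟨N, hN⟩ := exists_nat_one_div_lt hε
  refine ⟨N + 1, fun n hn ω => ?_⟩
  obtain ⟨m, rfl⟩ : ∃ m, n = m + 1 := ⟨n - 1, by omega⟩
  obtain ⟨a, b, c, d, hd, hab, hdet, hprod, hsub⟩ := fareyCyl_key m ω
  have hdR : (0:ℝ) < d := by exact_mod_cast hd
  have hcdR : (0:ℝ) < (c:ℝ) + d := by
    have : (0:ℝ) ≤ c := Nat.cast_nonneg c
    linarith
  have hδ : Metric.diam (fareyCyl (m+1) ω)
      ≤ Metric.diam (Set.uIcc ((b:ℝ)/d) (((a:ℝ)+b)/((c:ℝ)+d))) :=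
    Metric.diam_mono hsub (by rw [Set.uIcc]; exact Metric.isBounded_Icc _ _)
  have hdiam : Metric.diam (Set.uIcc ((b:ℝ)/d) (((a:ℝ)+b)/((c:ℝ)+d)))
      = |((a:ℝ)+b)/((c:ℝ)+d) - (b:ℝ)/d| := by
    rw [Set.uIcc, Real.diam_Icc min_le_max, ← max_sub_min_eq_abs]
  have hval : |((a:ℝ)+b)/((c:ℝ)+d) - (b:ℝ)/d| = 1 / ((d:ℝ) * ((c:ℝ)+d)) := by
    rw [div_sub_div _ _ (ne_of_gt hcdR) (ne_of_gt hdR), abs_div,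
      abs_of_pos (mul_pos hcdR hdR)]
    rw [show ((a:ℝ)+b)*d - ((c:ℝ)+d)*b = (a:ℝ)*d - b*c by ring]
    rcases Int.natAbs_eq_iff.mp hdet with h' | h'
    · have h1 : (a:ℝ)*d - b*c = 1 := by exact_mod_cast h'
      rw [h1, abs_one, mul_comm]
    · have h1 : (a:ℝ)*d - b*c = -1 := by exact_mod_cast h'
      rw [h1, abs_neg, abs_one, mul_comm]
  have hkey : (N:ℝ) + 1 ≤ (d:ℝ) * ((c:ℝ) + d) := by
    have h2 : N + 1 ≤ d * (c + d) := le_trans (by omega) hprod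
    exact_mod_cast h2
  have hle : (1:ℝ) / ((d:ℝ) * ((c:ℝ)+d)) ≤ 1 / ((N:ℝ) + 1) := by
    apply div_le_div_of_nonneg_left (by norm_num) (by positivity) hkey
  calc Metric.diam (fareyCyl (m+1) ω) ≤ 1 / ((d:ℝ) * ((c:ℝ)+d)) := by
        rw [hdiam, hval] at hδ; exact hδ
    _ ≤ 1 / ((N:ℝ)+1) := hle
    _ < ε := hN
end
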